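/- arXiv:2101.10026 — 9 statements merged into one kernel-verified Lean document; each statement's English description precedes it below -/
import Mathlib

section
/- Every finite tree satisfies the Two-Points Condition when the boundary is taken to be the set of all vertices of degree 1: for any subset S of interior vertices with |S| ≥ 2, there exist at least two extreme points of S with respect to the set of leaves. -/
open Finset

variable {V : Type*} [Fintype V] [DecidableEq V]

noncomputable def lap (G : SimpleGraph V) [DecidableRel G.Adj] (μ : V → ℝ) (g : V → V → ℝ)
    (u : V → ℝ) (x : V) : ℝ :=
  (μ x)⁻¹ * ∑ y ∈ univ.filter (fun y => G.Adj x y), g x y * (u y - u x)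

noncomputable def nder (G : SimpleGraph V) [DecidableRel G.Adj] (B : Finset V) (μ : V → ℝ)
    (g : V → V → ℝ) (u : V → ℝ) (z : V) : ℝ :=
  (μ z)⁻¹ * ∑ x ∈ univ.filter (fun x => G.Adj x z ∧ x ∉ B), g x z * (u x - u z)

def IsWave (G : SimpleGraph V) [DecidableRel G.Adj] (B : Finset V) (μ : V → ℝ)
    (g : V → V → ℝ) (q : V → ℝ) (W : V → ℝ) (u : V → ℕ → ℝ) : Prop :=
  (∀ x, x ∉ B → ∀ t : ℕ, 1 ≤ t →
    (u x (t+1) - 2 * u x t + u x (t-1)) - lap G μ g (fun y => u y t) x + q x * u x t = 0) ∧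
  (∀ z ∈ B, ∀ t : ℕ, nder G B μ g (fun y => u y t) z = 0) ∧
  (∀ x, x ∉ B → u x 1 = u x 0) ∧
  (∀ x, u x 0 = W x)

def reduced (G : SimpleGraph V) (B : Finset V) : SimpleGraph V where
  Adj x y := G.Adj x y ∧ (x ∉ B ∨ y ∉ B)
  symm := ⟨fun _ _ h => ⟨h.1.symm, h.2.symm⟩⟩
  loopless := ⟨fun x h => G.loopless.irrefl x h.1⟩

def ExtremePt (G : SimpleGraph V) (B : Finset V) (S : Finset V) (x₀ : V) : Prop :=
  x₀ ∈ S ∧ ∃ z ∈ B, ∀ y ∈ S, y ≠ x₀ → G.edist z x₀ < G.edist z y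

def TwoPoints (G : SimpleGraph V) (B : Finset V) : Prop :=
  ∀ S : Finset V, (∀ v ∈ S, v ∉ B) → 2 ≤ S.card →
    ∃ x₀ x₁, x₀ ≠ x₁ ∧ ExtremePt G B S x₀ ∧ ExtremePt G B S x₁

/-!
Choose `x₀, x₁ ∈ S` at maximal distance. Continuing the geodesic from `x₁` through `x₀` as far
as possible ends at a leaf `z` with `d(x₁, z) = d(x₁, x₀) + d(x₀, z)`. For `y ∈ S`,
`d(z, y) + d(y, x₁) ≥ d(z, x₁) = d(z, x₀) + d(x₀, x₁) ≥ d(z, x₀) + d(y, x₁)`, so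
`d(z, y) ≥ d(z, x₀)`; equality would place `y` and `x₀` on the geodesic from `z` to `x₁` at the
same distance from `z`, and geodesics in a tree are unique, so `y = x₀`. Thus `x₀` is extreme,
and symmetrically so is `x₁`.
-/

namespace SimpleGraph

variable {α : Type*} {G : SimpleGraph α} {u v x y x₀ x₁ z : α}

lemma Walk.dist_add_dist_of_mem_support {p : G.Walk u v} (hp : p.length = G.dist u v)
    (hx : x ∈ p.support) : G.dist u x + G.dist x v = G.dist u v := by
  classical
  have hsplit : (p.takeUntil x hx).length + (p.dropUntil x hx).length = p.length := by
    rw [← Walk.length_append, Walk.take_spec]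
  have := dist_le (p.takeUntil x hx)
  have := dist_le (p.dropUntil x hx)
  have := (p.takeUntil x hx).reachable.dist_triangle_left v
  omega

lemma IsAcyclic.length_eq_dist (hG : G.IsAcyclic) {p : G.Walk u v} (hp : p.IsPath) :
    p.length = G.dist u v := by
  obtain ⟨q, hq, hql⟩ := p.reachable.exists_path_of_dist
  rw [← hql, Subtype.mk.inj (hG.subsingleton_path u v |>.elim ⟨p, hp⟩ ⟨q, hq⟩)]

lemma IsAcyclic.getVert_dist_of_mem_support (hG : G.IsAcyclic) {p : G.Walk u v} (hp : p.IsPath)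
    (hx : x ∈ p.support) : p.getVert (G.dist u x) = x := by
  classical
  rw [← hG.length_eq_dist (hp.takeUntil hx), Walk.getVert_length_takeUntil]

lemma IsTree.mem_support_of_dist_add_dist (hG : G.IsTree) {p : G.Walk u v} (hp : p.IsPath)
    (hx : G.dist u x + G.dist x v = G.dist u v) : x ∈ p.support := by
  obtain ⟨q, -, hq⟩ := hG.connected.exists_path_of_dist u x
  obtain ⟨r, -, hr⟩ := hG.connected.exists_path_of_dist x v
  have hqr : (q.append r).IsPath :=
    (q.append r).isPath_of_length_eq_dist (by rw [Walk.length_append]; omega)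
  rw [Subtype.mk.inj (hG.isAcyclic.subsingleton_path u v |>.elim ⟨p, hp⟩ ⟨_, hqr⟩)]
  exact Walk.support_subset_support_append_left _ _ q.end_mem_support

lemma IsTree.eq_of_dist_add_dist (hG : G.IsTree) (hx : G.dist u x + G.dist x v = G.dist u v)
    (hy : G.dist u y + G.dist y v = G.dist u v) (hxy : G.dist u x = G.dist u y) : x = y := by
  obtain ⟨p, hp, -⟩ := hG.connected.exists_path_of_dist u v
  rw [← hG.isAcyclic.getVert_dist_of_mem_support hp (hG.mem_support_of_dist_add_dist hp hx),
    ← hG.isAcyclic.getVert_dist_of_mem_support hp (hG.mem_support_of_dist_add_dist hp hy), hxy]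

lemma IsTree.dist_add_dist_of_adj (hG : G.IsTree) (hxy : G.Adj x y) (h : G.dist u x ≤ G.dist u y) :
    G.dist u x + G.dist x y = G.dist u y := by
  obtain ⟨q, hq, hql⟩ := hG.connected.exists_path_of_dist u x
  rw [dist_eq_one_iff_adj.mpr hxy]
  by_cases hy : y ∈ q.support
  · have := q.dist_add_dist_of_mem_support hql hy
    have := dist_eq_one_iff_adj.mpr hxy.symm
    omega
  · rw [← hG.isAcyclic.length_eq_dist (hq.concat hy hxy), Walk.length_concat, hql]

lemma IsTree.exists_degree_eq_one_dist_eq_add [Fintype α] [DecidableRel G.Adj] (hG : G.IsTree)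
    (hux : u ≠ x) : ∃ z, G.degree z = 1 ∧ G.dist u z = G.dist u x + G.dist x z := by
  let beyond : Finset α := {v | G.dist u v = G.dist u x + G.dist x v}
  obtain ⟨z, hz, hzmax⟩ := beyond.exists_max_image (G.dist u) ⟨x, by simp [beyond]⟩
  replace hz : G.dist u z = G.dist u x + G.dist x z := by simpa [beyond] using hz
  have hpos : 0 < G.dist u x := hG.connected.pos_dist_of_ne hux
  -- a neighbour farther from `u` would still lie beyond `x`, contradicting maximality
  have hnear (w : α) (hw : G.Adj z w) : G.dist u w + G.dist w z = G.dist u z := by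
    refine hG.dist_add_dist_of_adj hw.symm (not_lt.mp fun hlt => ?_)
    have := dist_eq_one_iff_adj.mpr hw
    have := hG.connected.dist_triangle (u := u) (v := x) (w := w)
    have := hG.connected.dist_triangle (u := x) (v := z) (w := w)
    have := hG.connected.dist_triangle (u := u) (v := z) (w := w)
    have := hzmax w (by simp only [beyond, Finset.mem_filter, Finset.mem_univ, true_and]; omega)
    omega
  have hzu : z ≠ u := by
    rintro rfl
    rw [dist_self] at hz
    omega
  obtain ⟨s, hs⟩ := (hG.connected.preconnected z u).nonempty_neighborSet_left hzu
  refine ⟨z, degree_eq_one_iff_existsUnique_adj.mpr ⟨s, hs, fun w hw => ?_⟩, hz⟩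
  refine hG.eq_of_dist_add_dist (hnear w hw) (hnear s hs) ?_
  have := hnear w hw
  have := hnear s hs
  have := dist_eq_one_iff_adj.mpr hw.symm
  have := dist_eq_one_iff_adj.mpr hs.symm
  omega

lemma IsTree.dist_lt_dist_of_dist_eq_add (hG : G.IsTree) (hy : G.dist y x₁ ≤ G.dist x₀ x₁)
    (hz : G.dist x₁ z = G.dist x₁ x₀ + G.dist x₀ z) (hyx₀ : y ≠ x₀) :
    G.dist z x₀ < G.dist z y := by
  by_contra! hle
  have : G.dist z x₁ ≤ G.dist z y + G.dist y x₁ := hG.connected.dist_triangle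
  have : G.dist z x₁ = G.dist x₁ z := dist_comm
  have : G.dist z x₀ = G.dist x₀ z := dist_comm
  have : G.dist x₀ x₁ = G.dist x₁ x₀ := dist_comm
  exact hyx₀ (hG.eq_of_dist_add_dist (u := z) (v := x₁) (by omega) (by omega) (by omega))

lemma IsTree.extremePt_of_forall_dist_le [Fintype α] [DecidableRel G.Adj] (hG : G.IsTree)
    {B S : Finset α} (hB : ∀ v, v ∈ B ↔ G.degree v = 1) (hx₀ : x₀ ∈ S) (hne : x₀ ≠ x₁)
    (hmax : ∀ y ∈ S, G.dist y x₁ ≤ G.dist x₀ x₁) : ExtremePt G B S x₀ := by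
  obtain ⟨z, hzdeg, hz⟩ := hG.exists_degree_eq_one_dist_eq_add hne.symm
  refine ⟨hx₀, z, (hB z).mpr hzdeg, fun y hy hyx₀ => ?_⟩
  rw [← (hG.connected z x₀).coe_dist_eq_edist, ← (hG.connected z y).coe_dist_eq_edist,
    Nat.cast_lt]
  exact hG.dist_lt_dist_of_dist_eq_add (hmax y hy) hz hyx₀

end SimpleGraph

/-- Every finite tree satisfies the Two-Points Condition, the boundary being the set of
vertices of degree 1 (leaves). -/
theorem tree_twoPoints (G : SimpleGraph V) [DecidableRel G.Adj]
    (hT : G.IsTree)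
    (B : Finset V) (hB : ∀ v, v ∈ B ↔ G.degree v = 1) :
    TwoPoints G B := by
  intro S _ hcard
  obtain ⟨a, ha, b, hb, hab⟩ := Finset.one_lt_card.mp hcard
  obtain ⟨⟨x₀, x₁⟩, hx, hmax⟩ := (S ×ˢ S).exists_max_image (fun p => G.dist p.1 p.2)
    ⟨(a, b), Finset.mem_product.mpr ⟨ha, hb⟩⟩
  obtain ⟨hx₀, hx₁⟩ := Finset.mem_product.mp hx
  have hdiam (y₀ y₁ : V) (hy₀ : y₀ ∈ S) (hy₁ : y₁ ∈ S) : G.dist y₀ y₁ ≤ G.dist x₀ x₁ :=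
    hmax (y₀, y₁) (Finset.mem_product.mpr ⟨hy₀, hy₁⟩)
  have hne : x₀ ≠ x₁ := by
    rintro rfl
    have := hdiam a b ha hb
    rw [SimpleGraph.dist_self, Nat.le_zero, hT.connected.dist_eq_zero_iff] at this
    exact hab this
  refine ⟨x₀, x₁, hne, hT.extremePt_of_forall_dist_le hB hx₀ hne fun y hy => hdiam y x₁ hy hx₁,
    hT.extremePt_of_forall_dist_le hB hx₁ hne.symm fun y hy => ?_⟩
  rw [SimpleGraph.dist_comm (u := x₁)]
  exact hdiam y x₀ hy hx₀
end

section
/- Existence of a height function implies the Two-Points Condition: suppose h : G ∪ ∂G → ℝ satisfies (1) |h(x)-h(y)| ≤ 1 whenever x ~ y, and (2) for every x ∈ G the sets N_+(x) = {y ~ x : h(y) = h(x)+1} and N_-(x) = {y ~ x : h(y) = h(x)-1} each have exactly one element, while for z ∈ ∂G they have at most one element. Then every subset S ⊆ G with |S| ≥ 2 has at least two extreme points with respect to ∂G. -/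
open Finset

variable {V : Type*} [Fintype V] [DecidableEq V]

/-! A maximiser `x` of `h` on `S` is extreme. Climbing from `x` through upper neighbours reaches
some `z ∈ B` with `h z = h x + n` after `n` steps, so `d(z, x) ≤ n`. Every other `y ∈ S` has
`d(z, y) ≥ h z - h y ≥ n`, and equality would make a geodesic from `z` to `y` descend by exactly
one at each step; lower neighbours being unique, it would retrace the climb and end at `x`.
Applied to `-h`, the same makes a minimiser of `h` extreme; if `h` is constant on `S`, every point
is both, so the two can be chosen distinct. -/

section HeightFunction

variable {α : Type*} {G : SimpleGraph α} {h : α → ℝ}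

theorem SimpleGraph.Walk.sub_le_length (hLip : ∀ x y, G.Adj x y → |h x - h y| ≤ 1) {a b : α}
    (p : G.Walk a b) : h a - h b ≤ p.length := by
  induction p with
  | nil => simp
  | cons hadj _ ih =>
    have := (abs_le.mp (hLip _ _ hadj)).2
    rw [SimpleGraph.Walk.length_cons, Nat.cast_succ]
    linarith

theorem SimpleGraph.Walk.eq_of_sub_eq_length (hLip : ∀ x y, G.Adj x y → |h x - h y| ≤ 1)
    (hDown : ∀ x, {y | G.Adj x y ∧ h y = h x - 1}.Subsingleton) {a b c : α}
    (p : G.Walk a b) (q : G.Walk a c) (hpq : p.length = q.length)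
    (hp : h a - h b = p.length) (hq : h a - h c = q.length) : b = c := by
  induction p with
  | nil =>
    cases q with
    | nil => rfl
    | cons => simp at hpq
  | cons hadj p ih =>
    cases q with
    | nil => simp at hpq
    | cons hadj' q =>
      simp only [SimpleGraph.Walk.length_cons, Nat.cast_succ, add_left_inj] at hpq hp hq
      have hstep := (abs_le.mp (hLip _ _ hadj)).2
      have hstep' := (abs_le.mp (hLip _ _ hadj')).2
      have hrest := p.sub_le_length hLip
      have hrest' := q.sub_le_length hLip
      obtain rfl : _ = _ := hDown _ ⟨hadj, by linarith⟩ ⟨hadj', by linarith⟩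
      exact ih q hpq (by linarith) (by linarith)

theorem SimpleGraph.exists_ascending_walk_to_mem [Finite α] (B : Set α)
    (hUp : ∀ x ∉ B, {y | G.Adj x y ∧ h y = h x + 1}.Nonempty) (x : α) :
    ∃ z ∈ B, ∃ p : G.Walk x z, h z = h x + p.length := by
  induction hk : {v | h x < h v}.ncard using Nat.strong_induction_on generalizing x with
  | _ k ih =>
    by_cases hx : x ∈ B
    · exact ⟨x, hx, .nil, by simp⟩
    obtain ⟨y, hxy, hy⟩ := hUp x hx
    have hfewer : {v | h y < h v}.ncard < k := by
      rw [← hk]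
      exact Set.ncard_lt_ncard ⟨fun v (hv : h y < h v) => show h x < h v by linarith,
        fun hsub => lt_irrefl (h y) (hsub (show h x < h y by linarith))⟩
    obtain ⟨z, hz, p, hp⟩ := ih _ hfewer y rfl
    refine ⟨z, hz, .cons hxy p, ?_⟩
    rw [SimpleGraph.Walk.length_cons, Nat.cast_succ]
    linarith

theorem Finset.exists_ne_isMaxOn_isMinOn {β : Type*} [LinearOrder β] {S : Finset α}
    (hS : 2 ≤ S.card) (f : α → β) :
    ∃ a ∈ S, ∃ b ∈ S, a ≠ b ∧ IsMaxOn f S a ∧ IsMinOn f S b := by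
  have hne : S.Nonempty := card_pos.mp (by omega)
  obtain ⟨a, ha, hmax⟩ := S.exists_max_image f hne
  obtain ⟨b, hb, hmin⟩ := S.exists_min_image f hne
  by_cases hab : a = b
  · subst hab
    obtain ⟨c, hc, hca⟩ := S.exists_mem_ne (by omega) a
    refine ⟨a, ha, c, hc, hca.symm, isMaxOn_iff.mpr hmax, isMinOn_iff.mpr fun y hy => ?_⟩
    exact (hmax c hc).trans (hmin y hy)
  · exact ⟨a, ha, b, hb, hab, isMaxOn_iff.mpr hmax, isMinOn_iff.mpr hmin⟩

theorem extremePt_of_isMaxOn [Finite α] {B S : Finset α}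
    (hLip : ∀ x y, G.Adj x y → |h x - h y| ≤ 1)
    (hUp : ∀ x ∉ B, {y | G.Adj x y ∧ h y = h x + 1}.Nonempty)
    (hDown : ∀ x, {y | G.Adj x y ∧ h y = h x - 1}.Subsingleton)
    {x : α} (hx : x ∈ S) (hmax : IsMaxOn h S x) : ExtremePt G B S x := by
  obtain ⟨z, hz, p, hp⟩ := G.exists_ascending_walk_to_mem (B : Set α) hUp x
  refine ⟨hx, z, hz, fun y hy hyx => ?_⟩
  refine (G.edist_le p.reverse).trans_lt (lt_of_not_ge fun hle => hyx ?_)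
  obtain ⟨q, hq⟩ := G.exists_walk_of_edist_ne_top (ne_top_of_le_ne_top (by simp) hle)
  have hqp : (q.length : ℝ) ≤ p.length := by
    rw [← hq, SimpleGraph.Walk.length_reverse] at hle
    exact_mod_cast hle
  have hrev : (p.reverse.length : ℝ) = p.length := by rw [SimpleGraph.Walk.length_reverse]
  have hdrop := q.sub_le_length hLip
  have hyx' := isMaxOn_iff.mp hmax y hy
  have hlen : (q.length : ℝ) = p.reverse.length := by linarith
  exact q.eq_of_sub_eq_length hLip hDown p.reverse (by exact_mod_cast hlen) (by linarith)
    (by linarith)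

end HeightFunction

/-- Existence of a height function implies the Two-Points Condition. -/
theorem height_implies_twoPoints (G : SimpleGraph V) [DecidableRel G.Adj] (B : Finset V)
    (h : V → ℝ)
    (hLip : ∀ x y, G.Adj x y → |h x - h y| ≤ 1)
    (hInt : ∀ x, x ∉ B →
      (univ.filter (fun y => G.Adj x y ∧ h y = h x + 1)).card = 1 ∧
      (univ.filter (fun y => G.Adj x y ∧ h y = h x - 1)).card = 1)
    (hBnd : ∀ z ∈ B,
      (univ.filter (fun y => G.Adj z y ∧ h y = h z + 1)).card ≤ 1 ∧
      (univ.filter (fun y => G.Adj z y ∧ h y = h z - 1)).card ≤ 1) :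
    TwoPoints G B := by
  have hUp : ∀ x ∉ B, {y | G.Adj x y ∧ h y = h x + 1}.Nonempty := fun x hx => by
    rw [← coe_filter_univ]; exact coe_nonempty.mpr (card_pos.mp ((hInt x hx).1 ▸ one_pos))
  have hDownEx : ∀ x ∉ B, {y | G.Adj x y ∧ h y = h x - 1}.Nonempty := fun x hx => by
    rw [← coe_filter_univ]; exact coe_nonempty.mpr (card_pos.mp ((hInt x hx).2 ▸ one_pos))
  have hCard : ∀ x, (univ.filter fun y => G.Adj x y ∧ h y = h x + 1).card ≤ 1 ∧
      (univ.filter fun y => G.Adj x y ∧ h y = h x - 1).card ≤ 1 := fun x =>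
    if hx : x ∈ B then hBnd x hx else ⟨(hInt x hx).1.le, (hInt x hx).2.le⟩
  have hUpSub : ∀ x, {y | G.Adj x y ∧ h y = h x + 1}.Subsingleton := fun x => by
    simpa using card_le_one_iff_subsingleton.mp (hCard x).1
  have hDownSub : ∀ x, {y | G.Adj x y ∧ h y = h x - 1}.Subsingleton := fun x => by
    simpa using card_le_one_iff_subsingleton.mp (hCard x).2
  intro S _ hS
  obtain ⟨x₀, hx₀, x₁, hx₁, hne, hmax, hmin⟩ := S.exists_ne_isMaxOn_isMinOn hS h
  refine ⟨x₀, x₁, hne, extremePt_of_isMaxOn hLip hUp hDownSub hx₀ hmax,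
    extremePt_of_isMaxOn (h := (- h ·)) (fun x y hxy => ?_) (fun x hx => ?_) (fun x => ?_)
      hx₁ hmin.neg⟩
  · rw [neg_sub_neg, abs_sub_comm]; exact hLip x y hxy
  · obtain ⟨y, hxy, hy⟩ := hDownEx x hx
    exact ⟨y, hxy, by linarith⟩
  · exact (hUpSub x).anti fun y ⟨hxy, hy⟩ => ⟨hxy, by linarith⟩
end

section
/- In the proof of the height-function criterion: if h satisfies the two conditions of the height-function criterion and x0 ∈ S is a point where h attains its maximum over S (with |S| ≥ 2), then x0 is an extreme point of S with respect to ∂G; moreover the boundary point realizing it is the endpoint of the unique maximal ascending path starting from x0. -/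
open Finset

variable {V : Type*} [Fintype V] [DecidableEq V]

/-!
Follow the ascending path from `x₀`; it ends at a boundary vertex `z` with `h z = h x₀ + n`,
so `d(z, x₀) ≤ n`. If `h y ≤ h x₀` and some walk from `z` to `y` had length at most `n`, the
Lipschitz bound would force it to have length exactly `n` and to descend by one at every step.
Descending neighbours being unique, such a walk retraces the ascending path, so `y = x₀`.
-/

namespace SimpleGraph

variable {G : SimpleGraph V} {h : V → ℝ}

def HasUniqueDescent (G : SimpleGraph V) (h : V → ℝ) : Prop :=
  ∀ x, {y | G.Adj x y ∧ h y = h x - 1}.Subsingleton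

def IsAscendingPath (G : SimpleGraph V) (h : V → ℝ) (n : ℕ) (p : ℕ → V) : Prop :=
  ∀ i < n, G.Adj (p i) (p (i + 1)) ∧ h (p (i + 1)) = h (p i) + 1

omit [Fintype V] [DecidableEq V] in
theorem Walk.sub_le_length_s5 (hLip : ∀ x y, G.Adj x y → |h x - h y| ≤ 1) {a b : V}
    (w : G.Walk a b) : h a - h b ≤ w.length := by
  induction w with
  | nil => simp
  | cons hadj w ih =>
    have := (abs_le.mp (hLip _ _ hadj)).2
    rw [Walk.length_cons, Nat.cast_succ]
    linarith

omit [Fintype V] [DecidableEq V] in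
theorem Walk.eq_of_height_drop_eq_length (hLip : ∀ x y, G.Adj x y → |h x - h y| ≤ 1)
    (hdesc : HasUniqueDescent G h) {a b b' : V} (w : G.Walk a b) (w' : G.Walk a b')
    (hlen : w.length = w'.length) (hw : h a = h b + w.length) (hw' : h a = h b' + w'.length) :
    b = b' := by
  induction w with
  | nil => cases w' with
    | nil => rfl
    | cons => simp at hlen
  | cons hadj w ih => cases w' with
    | nil => simp at hlen
    | cons hadj' w' =>
      -- the rest of each walk drops by at most its length, so the first steps drop by exactly one
      have hrest := w.sub_le_length_s5 hLip
      have hrest' := w'.sub_le_length_s5 hLip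
      have hstep := (abs_le.mp (hLip _ _ hadj)).2
      have hstep' := (abs_le.mp (hLip _ _ hadj')).2
      simp only [Walk.length_cons, Nat.cast_succ, add_left_inj] at hlen hw hw'
      have hlenℝ : (w.length : ℝ) = w'.length := by exact_mod_cast hlen
      obtain rfl := hdesc _ (⟨hadj, by linarith⟩ : _ ∧ _) (⟨hadj', by linarith⟩ : _ ∧ _)
      exact ih w' hlen (by linarith) (by linarith)

omit [Fintype V] [DecidableEq V] in
theorem Walk.length_lt_edist (hLip : ∀ x y, G.Adj x y → |h x - h y| ≤ 1)
    (hdesc : HasUniqueDescent G h) {a b c : V} (w : G.Walk a b) (hw : h a = h b + w.length)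
    (hc : h c ≤ h b) (hcb : c ≠ b) : (w.length : ℕ∞) < G.edist a c := by
  by_contra! hle
  obtain ⟨w', hw'len⟩ := exists_walk_of_edist_ne_top (hle.trans_lt (ENat.natCast_lt_top _)).ne
  have hshort : w'.length ≤ w.length := by rw [← hw'len] at hle; exact_mod_cast hle
  have hdrop := w'.sub_le_length_s5 hLip
  have hlen : w'.length = w.length :=
    le_antisymm hshort (by exact_mod_cast (by linarith : (w.length : ℝ) ≤ w'.length))
  have hw' : h a = h c + w'.length := by rw [hlen] at hdrop ⊢; linarith
  exact hcb (w'.eq_of_height_drop_eq_length hLip hdesc w hlen hw' hw)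

omit [Fintype V] [DecidableEq V] in
theorem IsAscendingPath.exists_walk {n : ℕ} {p : ℕ → V} (hp : IsAscendingPath G h n p) :
    ∃ w : G.Walk (p n) (p 0), h (p n) = h (p 0) + w.length := by
  induction n with
  | zero => exact ⟨Walk.nil, by simp⟩
  | succ m ih =>
    obtain ⟨w, hw⟩ := ih fun i hi => hp i (by omega)
    obtain ⟨hadj, hup⟩ := hp m (by omega)
    exact ⟨w.cons hadj.symm, by rw [Walk.length_cons, Nat.cast_succ, hup, hw]; ring⟩

omit [DecidableEq V] in
theorem exists_maximal_ascendingPath (G : SimpleGraph V) (h : V → ℝ) (x : V) :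
    ∃ n p, p 0 = x ∧ IsAscendingPath G h n p ∧
      ∀ y, G.Adj (p n) y → h y ≠ h (p n) + 1 := by
  by_cases hup : ∃ y, G.Adj x y ∧ h y = h x + 1
  · obtain ⟨y, hxy, hy⟩ := hup
    obtain ⟨n, p, hp0, hp, hend⟩ := exists_maximal_ascendingPath G h y
    refine ⟨n + 1, fun | 0 => x | i + 1 => p i, rfl, ?_, hend⟩
    rintro (_ | i) hi
    · show G.Adj x (p 0) ∧ h (p 0) = h x + 1
      exact hp0 ▸ ⟨hxy, hy⟩
    · exact hp i (by omega)
  · push Not at hup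
    exact ⟨0, fun _ => x, rfl, fun _ hi => absurd hi (Nat.not_lt_zero _), hup⟩
termination_by (univ.filter fun v => h x < h v).card
decreasing_by
  refine card_lt_card (ssubset_iff_of_subset ?_ |>.mpr ⟨y, ?_, ?_⟩)
  · intro v hv
    simp only [mem_filter, mem_univ, true_and] at hv ⊢
    linarith
  · simp only [mem_filter, mem_univ, true_and]
    linarith
  · simp

end SimpleGraph

theorem height_max_is_extreme_general (G : SimpleGraph V) [DecidableRel G.Adj] (B : Finset V)
    (h : V → ℝ)
    (hLip : ∀ x y, G.Adj x y → |h x - h y| ≤ 1)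
    (hInt : ∀ x, x ∉ B →
      (univ.filter (fun y => G.Adj x y ∧ h y = h x + 1)).card = 1 ∧
      (univ.filter (fun y => G.Adj x y ∧ h y = h x - 1)).card = 1)
    (hBnd : ∀ z ∈ B,
      (univ.filter (fun y => G.Adj z y ∧ h y = h z + 1)).card ≤ 1 ∧
      (univ.filter (fun y => G.Adj z y ∧ h y = h z - 1)).card ≤ 1)
    (S : Finset V)
    (x₀ : V) (hmax : ∀ y ∈ S, h y ≤ h x₀) :
    ∃ z ∈ B,
      (∃ (n : ℕ) (p : ℕ → V), p 0 = x₀ ∧ p n = z ∧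
        (∀ i < n, G.Adj (p i) (p (i+1)) ∧ h (p (i+1)) = h (p i) + 1) ∧
        (univ.filter (fun y => G.Adj z y ∧ h y = h z + 1)).card = 0) ∧
      (∀ y ∈ S, y ≠ x₀ → G.edist z x₀ < G.edist z y) := by
  obtain ⟨n, p, rfl, hp, hend⟩ := SimpleGraph.exists_maximal_ascendingPath G h x₀
  have htop : (univ.filter (fun y => G.Adj (p n) y ∧ h y = h (p n) + 1)).card = 0 := by
    simpa [filter_eq_empty_iff] using hend
  have hzB : p n ∈ B := by
    by_contra hz
    simpa [htop] using (hInt (p n) hz).1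
  have hdesc : G.HasUniqueDescent h := fun x y hy y' hy' => by
    have hle : (univ.filter (fun v => G.Adj x v ∧ h v = h x - 1)).card ≤ 1 := by
      by_cases hx : x ∈ B
      · exact (hBnd x hx).2
      · exact (hInt x hx).2.le
    exact card_le_one.mp hle y (by simpa using hy) y' (by simpa using hy')
  obtain ⟨w, hw⟩ := hp.exists_walk
  refine ⟨p n, hzB, ⟨n, p, rfl, rfl, hp, htop⟩, fun y hy hyx => ?_⟩
  calc G.edist (p n) (p 0) ≤ w.length := SimpleGraph.edist_le w
    _ < G.edist (p n) y := w.length_lt_edist hLip hdesc hw (hmax y hy) hyx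

/-- A maximum point of the height function over `S` is an extreme point of `S`, realized
by the boundary endpoint of the unique maximal ascending path starting from it. -/
theorem height_max_is_extreme (G : SimpleGraph V) [DecidableRel G.Adj] (B : Finset V)
    (h : V → ℝ)
    (hLip : ∀ x y, G.Adj x y → |h x - h y| ≤ 1)
    (hInt : ∀ x, x ∉ B →
      (univ.filter (fun y => G.Adj x y ∧ h y = h x + 1)).card = 1 ∧
      (univ.filter (fun y => G.Adj x y ∧ h y = h x - 1)).card = 1)
    (hBnd : ∀ z ∈ B,
      (univ.filter (fun y => G.Adj z y ∧ h y = h z + 1)).card ≤ 1 ∧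
      (univ.filter (fun y => G.Adj z y ∧ h y = h z - 1)).card ≤ 1)
    (S : Finset V) (hS : ∀ v ∈ S, v ∉ B) (hcard : 2 ≤ S.card)
    (x₀ : V) (hx₀ : x₀ ∈ S) (hmax : ∀ y ∈ S, h y ≤ h x₀) :
    ∃ z ∈ B,
      (∃ (n : ℕ) (p : ℕ → V), p 0 = x₀ ∧ p n = z ∧
        (∀ i < n, G.Adj (p i) (p (i+1)) ∧ h (p (i+1)) = h (p i) + 1) ∧
        (univ.filter (fun y => G.Adj z y ∧ h y = h z + 1)).card = 0) ∧
      (∀ y ∈ S, y ≠ x₀ → G.edist z x₀ < G.edist z y) :=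
  height_max_is_extreme_general G B h hLip hInt hBnd S x₀ hmax
end

section
/- Extreme points can be realized avoiding intermediate boundary points: if x0 ∈ S ⊆ G is an extreme point of S realized by some z ∈ ∂G, then there exists z0 ∈ ∂G also realizing the extreme point condition for x0 such that no shortest path from x0 to z0 passes through any boundary point other than z0. -/
open Finset

variable {V : Type*} [Fintype V] [DecidableEq V]

/-! Among the boundary points realizing `x₀`, take one, `z₀`, nearest to `x₀`. A boundary point
`w` on a shortest path from `x₀` to `z₀` again realizes `x₀`, by the triangle inequality through
`w`, and is strictly nearer to `x₀` unless `w = z₀`. -/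

namespace SimpleGraph

variable {α : Type*} {G : SimpleGraph α} {u v w : α}

lemma Walk.edist_add_edist_of_mem_support (p : G.Walk u v) (hp : p.length = G.dist u v)
    (hw : w ∈ p.support) : G.edist u w + G.edist w v = G.edist u v := by
  obtain ⟨q, r, rfl⟩ := Walk.mem_support_iff_exists_append.mp hw
  rw [← q.reachable.coe_dist_eq_edist, ← r.reachable.coe_dist_eq_edist,
    ← (q.append r).reachable.coe_dist_eq_edist,
    ← length_eq_dist_of_subwalk hp (Walk.isSubwalk_of_append_left rfl),
    ← length_eq_dist_of_subwalk hp (Walk.isSubwalk_of_append_right rfl), ← hp,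
    Walk.length_append, Nat.cast_add]

lemma Walk.edist_lt_of_mem_support (p : G.Walk u v) (hp : p.length = G.dist u v)
    (hw : w ∈ p.support) (hne : w ≠ v) : G.edist u w < G.edist u v := by
  classical
  have huw : G.edist u w ≠ ⊤ := edist_ne_top_iff_reachable.mpr (p.takeUntil w hw).reachable
  rw [← p.edist_add_edist_of_mem_support hp hw]
  simpa using (ENat.add_lt_add_iff_left huw).mpr (edist_pos_of_ne hne)

def RealizesExtremePt (G : SimpleGraph α) (S : Set α) (x z : α) : Prop :=
  ∀ y ∈ S, y ≠ x → G.edist z x < G.edist z y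

lemma RealizesExtremePt.of_mem_support {S : Set α} (h : G.RealizesExtremePt S u v)
    (p : G.Walk u v) (hp : p.length = G.dist u v) (hw : w ∈ p.support) :
    G.RealizesExtremePt S u w := by
  classical
  intro y hy hyu
  have hwv : G.edist v w ≠ ⊤ := edist_ne_top_iff_reachable.mpr (p.dropUntil w hw).reachable.symm
  rw [← ENat.add_lt_add_iff_right hwv]
  calc G.edist w u + G.edist v w
      = G.edist v u := by
        rw [edist_comm, edist_comm (u := v), edist_comm (u := v)]
        exact p.edist_add_edist_of_mem_support hp hw
    _ < G.edist v y := h y hy hyu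
    _ ≤ G.edist v w + G.edist w y := G.edist_triangle
    _ = G.edist w y + G.edist v w := add_comm _ _

end SimpleGraph

theorem extreme_point_avoiding_boundary_general (G : SimpleGraph V) (B : Finset V)
    (S : Finset V)
    (x₀ : V) (hx₀ : ExtremePt G B S x₀) :
    ∃ z₀ ∈ B,
      (∀ y ∈ S, y ≠ x₀ → G.edist z₀ x₀ < G.edist z₀ y) ∧
      (∀ p : G.Walk x₀ z₀, p.length = G.dist x₀ z₀ →
        ∀ w ∈ p.support, w ∈ B → w = z₀) := by
  classical
  obtain ⟨-, z, hzB, hz⟩ := hx₀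
  obtain ⟨z₀, hz₀, hmin⟩ := (B.filter (G.RealizesExtremePt S x₀)).exists_min_image
    (G.edist x₀) ⟨z, mem_filter.mpr ⟨hzB, hz⟩⟩
  obtain ⟨hz₀B, hz₀⟩ := mem_filter.mp hz₀
  refine ⟨z₀, hz₀B, hz₀, fun p hp w hw hwB => ?_⟩
  by_contra hne
  exact (hmin w (mem_filter.mpr ⟨hwB, hz₀.of_mem_support p hp hw⟩)).not_gt
    (p.edist_lt_of_mem_support hp hw hne)

/-- An extreme point can always be realized by a boundary point such that no shortest
path to it passes through any other boundary point. -/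
theorem extreme_point_avoiding_boundary (G : SimpleGraph V) (B : Finset V)
    (hconn : G.Connected)
    (S : Finset V) (hS : ∀ v ∈ S, v ∉ B)
    (x₀ : V) (hx₀ : ExtremePt G B S x₀) :
    ∃ z₀ ∈ B,
      (∀ y ∈ S, y ≠ x₀ → G.edist z₀ x₀ < G.edist z₀ y) ∧
      (∀ p : G.Walk x₀ z₀, p.length = G.dist x₀ z₀ →
        ∀ w ∈ p.support, w ∈ B → w = z₀) :=
  extreme_point_avoiding_boundary_general G B S x₀ hx₀
end

section
/- The Two-Points Condition is preserved under graph reduction: if (G, ∂G, E) satisfies the Two-Points Condition, then the reduced graph (G, ∂G, E_re), obtained by removing all edges between boundary vertices, also satisfies the Two-Points Condition with respect to its own distance function d_re. -/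
/-!
If `x₀` is the unique nearest point of `S` from a boundary vertex `z`, follow a shortest path
from `z` to `x₀` and let `z'` be its last boundary vertex. The part after `z'` uses no
boundary–boundary edge, so `d(z, z') + d_re(z', x₀) ≤ d(z, x₀)`, while for every other
`y ∈ S` we have `d(z, x₀) < d(z, y) ≤ d(z, z') + d_re(z', y)`. Cancelling `d(z, z')` shows that
`x₀` is the unique nearest point of `S` from `z'` for the reduced distance.
-/

open Finset

variable {V : Type*} [Fintype V] [DecidableEq V]

section

variable {α : Type*} {G : SimpleGraph α} {B : Finset α}

open SimpleGraph

lemma reduced_le : reduced G B ≤ G :=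
  fun _ _ h => h.1

lemma SimpleGraph.Walk.exists_edist_reduced_add_edist_le_length [DecidableEq α] {z x : α}
    (p : G.Walk z x) :
    ∃ z' ∈ insert z B, (reduced G B).edist z' x + G.edist z z' ≤ p.length := by
  induction p with
  | nil => exact ⟨_, mem_insert_self _ B, by simp⟩
  | @cons u v w huv p ih =>
    obtain ⟨z', hz', hle⟩ := ih
    rw [Walk.length_cons, Nat.cast_succ]
    by_cases hz'B : z' ∈ B
    · refine ⟨z', mem_insert_of_mem hz'B, ?_⟩
      calc (reduced G B).edist z' w + G.edist u z'
          ≤ (reduced G B).edist z' w + (G.edist v z' + G.edist u v) := by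
            rw [add_comm (G.edist v z')]; gcongr; exact SimpleGraph.edist_triangle
        _ ≤ p.length + 1 := by
            rw [← add_assoc]; exact add_le_add hle (edist_eq_one_iff_adj.mpr huv).le
    · obtain rfl : z' = v := by simpa [hz'B] using hz'
      refine ⟨u, mem_insert_self u B, ?_⟩
      have hred : (reduced G B).Adj u z' := ⟨huv, Or.inr hz'B⟩
      calc (reduced G B).edist u w + G.edist u u
          = (reduced G B).edist u w := by simp
        _ ≤ (reduced G B).edist z' w + (reduced G B).edist u z' := by
            rw [add_comm]; exact SimpleGraph.edist_triangle
        _ ≤ p.length + 1 :=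
            add_le_add (le_self_add.trans hle) (edist_eq_one_iff_adj.mpr hred).le

lemma exists_edist_reduced_add_edist_le [DecidableEq α] (z x : α) :
    ∃ z' ∈ insert z B, (reduced G B).edist z' x + G.edist z z' ≤ G.edist z x := by
  by_cases hzx : G.edist z x = ⊤
  · exact ⟨z, mem_insert_self z B, hzx ▸ le_top⟩
  · obtain ⟨p, hp⟩ := exists_walk_of_edist_ne_top hzx
    exact hp ▸ p.exists_edist_reduced_add_edist_le_length

lemma extremePt_reduced {S : Finset α} {x₀ : α} (hx : ExtremePt G B S x₀) :
    ExtremePt (reduced G B) B S x₀ := by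
  classical
  obtain ⟨hx₀S, z, hzB, hz⟩ := hx
  obtain ⟨z', hz', hle⟩ := exists_edist_reduced_add_edist_le (B := B) z x₀
  refine ⟨hx₀S, z', by simpa [hzB] using hz', fun y hyS hyx₀ => ?_⟩
  have hfin : G.edist z z' ≠ ⊤ :=
    ((le_add_self.trans hle).trans_lt ((hz y hyS hyx₀).trans_le le_top)).ne
  refine (WithTop.add_lt_add_iff_left hfin).mp ?_
  calc G.edist z z' + (reduced G B).edist z' x₀
      ≤ G.edist z x₀ := by rw [add_comm]; exact hle
    _ < G.edist z y := hz y hyS hyx₀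
    _ ≤ G.edist z z' + G.edist z' y := SimpleGraph.edist_triangle
    _ ≤ G.edist z z' + (reduced G B).edist z' y := by gcongr; exact reduced_le

end

/-- The Two-Points Condition is preserved when passing to the reduced graph, obtained by
removing all edges between boundary vertices. -/
theorem twoPoints_reduced (G : SimpleGraph V) (B : Finset V)
    (hTP : TwoPoints G B) :
    TwoPoints (reduced G B) B := by
  intro S hS hcard
  obtain ⟨x₀, x₁, hne, h₀, h₁⟩ := hTP S hS hcard
  exact ⟨x₀, x₁, hne, extremePt_reduced h₀, extremePt_reduced h₁⟩
end

section
/- Distance monotonicity near the boundary: let (G, ∂G, E) be a finite connected graph with boundary whose reduced graph is connected, and suppose that for any z ∈ ∂G and any x, y ∈ G with x ~ z and y ~ z, one has x ~ y. Then for any x ∈ G and z ∈ ∂G with x ~ z, and any vertex p ≠ z, we have d_re(x, p) ≤ d_re(z, p), where d_re is the distance of the reduced graph. -/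
open Finset

variable {V : Type*} [Fintype V] [DecidableEq V]

/-! The first step of a shortest reduced walk from `z ∈ ∂G` to `p` lands on an interior
vertex `y` (boundary–boundary edges are gone), so `y = x` or `y ~ x`, and
`d(x, p) ≤ 1 + d(y, p) = d(z, p)`. -/

namespace SimpleGraph

variable {α : Type*} {G : SimpleGraph α} {u v x : α}

lemma Reachable.exists_adj_dist_eq_add_one (h : G.Reachable u v) (hne : u ≠ v) :
    ∃ w, G.Adj u w ∧ G.dist u v = G.dist w v + 1 := by
  obtain ⟨p, hp⟩ := h.exists_walk_length_eq_dist
  cases p with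
  | nil => exact absurd rfl hne
  | cons huw q =>
    refine ⟨_, huw, le_antisymm ?_ ?_⟩
    · calc G.dist u v ≤ G.dist u _ + G.dist _ v := q.reachable.dist_triangle_right u
        _ = G.dist _ v + 1 := by rw [dist_eq_one_iff_adj.mpr huw, add_comm]
    · rw [← hp, Walk.length_cons]
      exact Nat.succ_le_succ (dist_le q)

lemma Reachable.dist_le_of_forall_adj_imp_eq_or_adj (h : G.Reachable u v) (hne : u ≠ v)
    (hx : ∀ w, G.Adj u w → x = w ∨ G.Adj x w) : G.dist x v ≤ G.dist u v := by
  obtain ⟨w, huw, hdist⟩ := h.exists_adj_dist_eq_add_one hne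
  have hxw : G.dist x w ≤ 1 := by
    rcases hx w huw with rfl | hxw
    · simp
    · exact (dist_eq_one_iff_adj.mpr hxw).le
  calc G.dist x v ≤ G.dist x w + G.dist w v :=
        (huw.reachable.symm.trans h).dist_triangle_right x
    _ ≤ G.dist u v := by omega

end SimpleGraph

omit [Fintype V] [DecidableEq V] in
lemma notMem_of_reduced_adj_of_mem {G : SimpleGraph V} {B : Finset V} {z y : V} (hz : z ∈ B)
    (h : (reduced G B).Adj z y) : y ∉ B :=
  h.2.resolve_left (not_not.mpr hz)

theorem dist_mono_near_boundary_general (G : SimpleGraph V) (B : Finset V)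
    (hconnre : (reduced G B).Connected)
    (hadj : ∀ z ∈ B, ∀ x y : V, x ∉ B → y ∉ B → G.Adj x z → G.Adj y z → x ≠ y → G.Adj x y)
    (x z p : V) (hx : x ∉ B) (hz : z ∈ B) (hxz : G.Adj x z) (hp : p ≠ z) :
    (reduced G B).dist x p ≤ (reduced G B).dist z p := by
  refine (hconnre z p).dist_le_of_forall_adj_imp_eq_or_adj hp.symm fun y hzy => ?_
  by_cases hxy : x = y
  · exact .inl hxy
  · exact .inr ⟨hadj z hz x y hx (notMem_of_reduced_adj_of_mem hz hzy) hxz hzy.1.symm hxy,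
      .inl hx⟩

/-- Distance monotonicity near the boundary in the reduced graph. -/
theorem dist_mono_near_boundary (G : SimpleGraph V) (B : Finset V)
    (hconn : G.Connected)
    (hconnre : (reduced G B).Connected)
    (hadj : ∀ z ∈ B, ∀ x y : V, x ∉ B → y ∉ B → G.Adj x z → G.Adj y z → x ≠ y → G.Adj x y)
    (x z p : V) (hx : x ∉ B) (hz : z ∈ B) (hxz : G.Adj x z) (hp : p ≠ z) :
    (reduced G B).dist x p ≤ (reduced G B).dist z p :=
  dist_mono_near_boundary_general G B hconnre hadj x z p hx hz hxz hp
end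

section
/- Wavefront lemma (first part): let G be a finite connected weighted graph with boundary whose reduced graph is connected and satisfying the condition that boundary neighbors of a common boundary vertex are adjacent. Let x ∈ G, z ∈ ∂G, t0 = d_re(x,z), and let W be an initial value with d_nu W|_{∂G} = 0, W(z) = 0, and W vanishing on all interior vertices of the d_re-ball of radius t0 around z except possibly x. If W(x) > 0, then t0 ≥ 2, the wave u^W satisfies u^W(z,t) = 0 for all t < t0, and u^W(z,t0) > 0. -/
/-!
Write `ρ = d_re(z, ·)` and `t₀ = ρ(x)`. Since `W` vanishes on the interior ball of radius `t₀`
except at `x` and the initial velocity is zero, the wave moves by one edge per time step starting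
at time `1`: `u(y, t) = 0` whenever `t + ρ(y) ≤ t₀` and `y ≠ x`. On the front `t + ρ(y) = t₀`
the wave equation reduces to `u(y, t + 1) = Δu(·, t)(y)`, which is `≥ 0` since all neighbours
are nonnegative, and `> 0` along an interior `ρ`-geodesic from `x` towards `z`, by induction.
The Neumann condition makes every boundary value a positive weighted mean of its interior
neighbours, which carries vanishing and positivity over to `z` (and, applied to `W`, rules out
`t₀ = 1`). The clique condition at boundary vertices keeps the interior neighbours of a boundary
neighbour of `y` within `ρ(y) + 1`, and lets interior geodesics avoid the boundary.
-/

open Finset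

variable {V : Type*} [Fintype V] [DecidableEq V]

theorem SimpleGraph.exists_adj_dist_eq_of_dist_eq_succ {α : Type*} {G : SimpleGraph α}
    {u v : α} {n : ℕ} (h : G.dist u v = n + 1) : ∃ w, G.Adj v w ∧ G.dist u w = n := by
  have hreach : G.Reachable v u := (Reachable.of_dist_ne_zero (h ▸ n.succ_ne_zero)).symm
  obtain ⟨p, hp⟩ := hreach.exists_walk_length_eq_dist
  rw [dist_comm, h] at hp
  cases p with
  | nil => simp at hp
  | cons hvw q =>
    have hq : q.length = n := by simpa using hp
    refine ⟨_, hvw, le_antisymm ?_ ?_⟩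
    · exact dist_comm (G := G) ▸ hq ▸ dist_le q
    · have := hvw.diff_dist_adj (u := u)
      omega

def BoundaryNeighborsAdj {α : Type*} (G : SimpleGraph α) (B : Finset α) : Prop :=
  ∀ z ∈ B, ∀ a b : α, a ∉ B → b ∉ B → G.Adj a z → G.Adj b z → a ≠ b → G.Adj a b

section ReducedDist

variable {α : Type*} {G : SimpleGraph α} {B : Finset α}

theorem reduced_adj_of_notMem {y w : α} (hy : y ∉ B) (h : G.Adj y w) :
    (reduced G B).Adj y w :=
  ⟨h, Or.inl hy⟩

theorem reduced_dist_le_succ_of_adj {z y w : α} (hy : y ∉ B) (h : G.Adj y w) :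
    (reduced G B).dist z w ≤ (reduced G B).dist z y + 1 := by
  have := (reduced_adj_of_notMem hy h).diff_dist_adj (u := z)
  omega

theorem reduced_dist_le_succ_of_adj_boundary (hcl : BoundaryNeighborsAdj G B) {z y w a : α}
    (hy : y ∉ B) (hw : w ∈ B) (hyw : G.Adj y w) (ha : a ∉ B) (haw : G.Adj a w) :
    (reduced G B).dist z a ≤ (reduced G B).dist z y + 1 := by
  rcases eq_or_ne y a with rfl | hya
  · omega
  · exact reduced_dist_le_succ_of_adj hy (hcl w hw y a hy ha hyw haw hya)

theorem exists_adj_notMem_reduced_dist_eq (hcl : BoundaryNeighborsAdj G B) {z y : α} {m : ℕ}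
    (hy : y ∉ B) (h : (reduced G B).dist z y = m + 2) :
    ∃ w, w ∉ B ∧ G.Adj y w ∧ (reduced G B).dist z w = m + 1 := by
  obtain ⟨v, hyv, hv⟩ := SimpleGraph.exists_adj_dist_eq_of_dist_eq_succ h
  by_cases hvB : v ∈ B
  · exfalso
    -- a geodesic through the boundary vertex `v` could skip it: its two neighbours are adjacent
    obtain ⟨v', hvv', hv'⟩ := SimpleGraph.exists_adj_dist_eq_of_dist_eq_succ hv
    have hv'B : v' ∉ B := hvv'.2.resolve_left (not_not.mpr hvB)
    have hyv' : y ≠ v' := by rintro rfl; omega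
    have := reduced_dist_le_succ_of_adj (z := z) hv'B
      (hcl v hvB y v' hy hv'B hyv.1 hvv'.1.symm hyv').symm
    omega
  · exact ⟨v, hvB, hyv.1, hv⟩

end ReducedDist

section Neumann

variable {α : Type*} [Fintype α] [DecidableEq α] {G : SimpleGraph α} [DecidableRel G.Adj]
  {B : Finset α} {μ : α → ℝ} {g : α → α → ℝ} {f : α → ℝ} {w : α}

theorem sum_interior_weight_pos (hg : ∀ a b, G.Adj a b → 0 < g a b) {a₀ : α} (ha₀ : a₀ ∉ B)
    (ha₀w : G.Adj a₀ w) : 0 < ∑ a ∈ univ.filter (fun a => G.Adj a w ∧ a ∉ B), g a w :=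
  sum_pos (fun a ha => hg a w (mem_filter.mp ha).2.1) ⟨a₀, by simp [ha₀, ha₀w]⟩

theorem eq_div_of_nder_eq_zero (hμ : μ w ≠ 0)
    (hS : ∑ a ∈ univ.filter (fun a => G.Adj a w ∧ a ∉ B), g a w ≠ 0)
    (h : nder G B μ g f w = 0) :
    f w = (∑ a ∈ univ.filter (fun a => G.Adj a w ∧ a ∉ B), g a w * f a) /
      ∑ a ∈ univ.filter (fun a => G.Adj a w ∧ a ∉ B), g a w := by
  have hsum := (mul_eq_zero.mp h).resolve_left (inv_ne_zero hμ)
  rw [eq_div_iff hS, mul_comm, sum_mul, eq_comm, ← sub_eq_zero, ← sum_sub_distrib]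
  simpa only [mul_sub] using hsum

theorem eq_zero_of_nder_eq_zero (hμ : 0 < μ w) (hg : ∀ a b, G.Adj a b → 0 < g a b)
    (h : nder G B μ g f w = 0) {a₀ : α} (ha₀ : a₀ ∉ B) (ha₀w : G.Adj a₀ w)
    (hf : ∀ a, a ∉ B → G.Adj a w → f a = 0) : f w = 0 := by
  rw [eq_div_of_nder_eq_zero hμ.ne' (sum_interior_weight_pos hg ha₀ ha₀w).ne' h,
    sum_eq_zero fun a ha => by rw [hf a (mem_filter.mp ha).2.2 (mem_filter.mp ha).2.1, mul_zero],
    zero_div]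

theorem nonneg_of_nder_eq_zero (hμ : 0 < μ w) (hg : ∀ a b, G.Adj a b → 0 < g a b)
    (h : nder G B μ g f w = 0) {a₀ : α} (ha₀ : a₀ ∉ B) (ha₀w : G.Adj a₀ w)
    (hf : ∀ a, a ∉ B → G.Adj a w → 0 ≤ f a) : 0 ≤ f w := by
  rw [eq_div_of_nder_eq_zero hμ.ne' (sum_interior_weight_pos hg ha₀ ha₀w).ne' h]
  refine div_nonneg (sum_nonneg fun a ha => ?_) (sum_interior_weight_pos hg ha₀ ha₀w).le
  obtain ⟨-, haw, ha⟩ := mem_filter.mp ha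
  exact mul_nonneg (hg a w haw).le (hf a ha haw)

theorem pos_of_nder_eq_zero (hμ : 0 < μ w) (hg : ∀ a b, G.Adj a b → 0 < g a b)
    (h : nder G B μ g f w = 0) (hf : ∀ a, a ∉ B → G.Adj a w → 0 ≤ f a)
    {a₀ : α} (ha₀ : a₀ ∉ B) (ha₀w : G.Adj a₀ w) (hfa₀ : 0 < f a₀) : 0 < f w := by
  rw [eq_div_of_nder_eq_zero hμ.ne' (sum_interior_weight_pos hg ha₀ ha₀w).ne' h]
  refine div_pos (sum_pos' (fun a ha => ?_) ⟨a₀, by simp [ha₀, ha₀w], ?_⟩)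
    (sum_interior_weight_pos hg ha₀ ha₀w)
  · obtain ⟨-, haw, ha⟩ := mem_filter.mp ha
    exact mul_nonneg (hg a w haw).le (hf a ha haw)
  · exact mul_pos (hg a₀ w ha₀w) hfa₀

end Neumann

section Laplacian

variable {α : Type*} [Fintype α] {G : SimpleGraph α} [DecidableRel G.Adj]
  {μ : α → ℝ} {g : α → α → ℝ} {f : α → ℝ} {y : α}

theorem lap_eq_zero_of_forall_adj (hf : ∀ w, G.Adj y w → f w = f y) : lap G μ g f y = 0 := by
  rw [lap, sum_eq_zero fun w hw => by rw [hf w (mem_filter.mp hw).2, sub_self, mul_zero],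
    mul_zero]

theorem lap_nonneg_of_forall_adj (hμ : 0 < μ y) (hg : ∀ a b, G.Adj a b → 0 < g a b)
    (hf : ∀ w, G.Adj y w → f y ≤ f w) : 0 ≤ lap G μ g f y := by
  refine mul_nonneg (inv_pos.mpr hμ).le (sum_nonneg fun w hw => ?_)
  have hyw := (mem_filter.mp hw).2
  exact mul_nonneg (hg y w hyw).le (sub_nonneg.mpr (hf w hyw))

theorem lap_pos_of_forall_adj (hμ : 0 < μ y) (hg : ∀ a b, G.Adj a b → 0 < g a b)
    (hf : ∀ w, G.Adj y w → f y ≤ f w) {w₀ : α} (hyw₀ : G.Adj y w₀) (hfw₀ : f y < f w₀) :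
    0 < lap G μ g f y := by
  refine mul_pos (inv_pos.mpr hμ) (sum_pos' (fun w hw => ?_) ⟨w₀, by simp [hyw₀], ?_⟩)
  · have hyw := (mem_filter.mp hw).2
    exact mul_nonneg (hg y w hyw).le (sub_nonneg.mpr (hf w hyw))
  · exact mul_pos (hg y w₀ hyw₀) (sub_pos.mpr hfw₀)

end Laplacian

section Wave

variable {α : Type*} [Fintype α] [DecidableEq α] {G : SimpleGraph α} [DecidableRel G.Adj]
  {B : Finset α} {μ : α → ℝ} {g : α → α → ℝ} {q W : α → ℝ} {u : α → ℕ → ℝ}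

theorem IsWave.succ_succ_eq_lap (hu : IsWave G B μ g q W u) {y : α} (hy : y ∉ B) {n : ℕ}
    (h1 : u y (n + 1) = 0) (h0 : u y n = 0) :
    u y (n + 2) = lap G μ g (fun v => u v (n + 1)) y := by
  have := hu.1 y hy (n + 1) le_add_self
  simp only [Nat.add_sub_cancel, h1, h0] at this
  linarith

theorem eq_zero_of_adj_of_forall_reduced_dist_le (hμ : ∀ v, 0 < μ v)
    (hg : ∀ a b, G.Adj a b → 0 < g a b) (hcl : BoundaryNeighborsAdj G B) {f : α → ℝ}
    (hN : ∀ w ∈ B, nder G B μ g f w = 0) {z y w : α} (hy : y ∉ B) (hyw : G.Adj y w)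
    (hf : ∀ a, a ∉ B → (reduced G B).dist z a ≤ (reduced G B).dist z y + 1 → f a = 0) :
    f w = 0 := by
  by_cases hw : w ∈ B
  · exact eq_zero_of_nder_eq_zero (hμ w) hg (hN w hw) hy hyw fun a ha haw =>
      hf a ha (reduced_dist_le_succ_of_adj_boundary hcl hy hw hyw ha haw)
  · exact hf w hw (reduced_dist_le_succ_of_adj hy hyw)

theorem nonneg_of_adj_of_forall_reduced_dist_le (hμ : ∀ v, 0 < μ v)
    (hg : ∀ a b, G.Adj a b → 0 < g a b) (hcl : BoundaryNeighborsAdj G B) {f : α → ℝ}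
    (hN : ∀ w ∈ B, nder G B μ g f w = 0) {z y w : α} (hy : y ∉ B) (hyw : G.Adj y w)
    (hf : ∀ a, a ∉ B → (reduced G B).dist z a ≤ (reduced G B).dist z y + 1 → 0 ≤ f a) :
    0 ≤ f w := by
  by_cases hw : w ∈ B
  · exact nonneg_of_nder_eq_zero (hμ w) hg (hN w hw) hy hyw fun a ha haw =>
      hf a ha (reduced_dist_le_succ_of_adj_boundary hcl hy hw hyw ha haw)
  · exact hf w hw (reduced_dist_le_succ_of_adj hy hyw)

theorem IsWave.eq_zero_of_add_reduced_dist_le (hu : IsWave G B μ g q W u) (hμ : ∀ v, 0 < μ v)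
    (hg : ∀ a b, G.Adj a b → 0 < g a b) (hcl : BoundaryNeighborsAdj G B) {x z : α} {r : ℕ}
    (hxr : r ≤ (reduced G B).dist z x)
    (hW : ∀ y, y ∉ B → (reduced G B).dist z y ≤ r → y ≠ x → W y = 0) :
    ∀ t y, y ∉ B → y ≠ x → t + (reduced G B).dist z y ≤ r → u y t = 0 := by
  intro t
  induction t using Nat.twoStepInduction with
  | zero => exact fun y hy hyx hyr => (hu.2.2.2 y).trans (hW y hy (by omega) hyx)
  | one => exact fun y hy hyx hyr =>
      (hu.2.2.1 y hy).trans ((hu.2.2.2 y).trans (hW y hy (by omega) hyx))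
  | more n ihn ihn1 =>
    intro y hy hyx hyr
    have hy1 : u y (n + 1) = 0 := ihn1 y hy hyx (by omega)
    rw [hu.succ_succ_eq_lap hy hy1 (ihn y hy hyx (by omega))]
    refine lap_eq_zero_of_forall_adj fun w hyw => hy1 ▸ ?_
    refine eq_zero_of_adj_of_forall_reduced_dist_le (z := z) hμ hg hcl
      (fun w hw => hu.2.1 w hw (n + 1)) hy hyw fun a ha hay => ihn1 a ha ?_ (by omega)
    rintro rfl
    omega

theorem IsWave.nonneg_of_add_reduced_dist_le (hu : IsWave G B μ g q W u) (hμ : ∀ v, 0 < μ v)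
    (hg : ∀ a b, G.Adj a b → 0 < g a b) (hcl : BoundaryNeighborsAdj G B) {x z : α} {r : ℕ}
    (hxr : r ≤ (reduced G B).dist z x)
    (hW : ∀ y, y ∉ B → (reduced G B).dist z y ≤ r → y ≠ x → W y = 0) (hWx : 0 ≤ W x) :
    ∀ t y, y ∉ B → t + (reduced G B).dist z y ≤ r → 0 ≤ u y (t + 1) := by
  have hzero := hu.eq_zero_of_add_reduced_dist_le hμ hg hcl hxr hW
  intro t
  induction t with
  | zero =>
    intro y hy hyr
    rw [hu.2.2.1 y hy, hu.2.2.2 y]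
    rcases eq_or_ne y x with rfl | hyx
    · exact hWx
    · exact (hW y hy (by omega) hyx).ge
  | succ s ih =>
    intro y hy hyr
    have hyx : y ≠ x := by rintro rfl; omega
    have hy1 : u y (s + 1) = 0 := hzero (s + 1) y hy hyx hyr
    rw [hu.succ_succ_eq_lap hy hy1 (hzero s y hy hyx (by omega))]
    refine lap_nonneg_of_forall_adj (hμ y) hg fun w hyw => hy1 ▸ ?_
    exact nonneg_of_adj_of_forall_reduced_dist_le (z := z) hμ hg hcl
      (fun w hw => hu.2.1 w hw (s + 1)) hy hyw fun a ha hay => ih a ha (by omega)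

theorem IsWave.exists_pos_of_lt_reduced_dist (hu : IsWave G B μ g q W u) (hμ : ∀ v, 0 < μ v)
    (hg : ∀ a b, G.Adj a b → 0 < g a b) (hcl : BoundaryNeighborsAdj G B) {x z : α} {r : ℕ}
    (hx : x ∉ B) (hxr : (reduced G B).dist z x = r)
    (hW : ∀ y, y ∉ B → (reduced G B).dist z y ≤ r → y ≠ x → W y = 0) (hWx : 0 < W x) :
    ∀ j, j < r → ∃ y, y ∉ B ∧ (reduced G B).dist z y + j = r ∧ 0 < u y (j + 1) := by
  have hzero := hu.eq_zero_of_add_reduced_dist_le hμ hg hcl hxr.ge hW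
  have hnonneg := hu.nonneg_of_add_reduced_dist_le hμ hg hcl hxr.ge hW hWx.le
  intro j
  induction j with
  | zero => exact fun _ => ⟨x, hx, hxr, by rw [hu.2.2.1 x hx, hu.2.2.2 x]; exact hWx⟩
  | succ j ih =>
    intro hj
    obtain ⟨y, hy, hyr, hyj⟩ := ih (by omega)
    obtain ⟨w, hw, hyw, hwr⟩ :=
      exists_adj_notMem_reduced_dist_eq (z := z) (m := r - j - 2) hcl hy (by omega)
    have hwx : w ≠ x := by rintro rfl; omega
    have hw1 : u w (j + 1) = 0 := hzero (j + 1) w hw hwx (by omega)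
    refine ⟨w, hw, by omega, ?_⟩
    rw [hu.succ_succ_eq_lap hw hw1 (hzero j w hw hwx (by omega))]
    refine lap_pos_of_forall_adj (hμ w) hg (fun v hwv => hw1 ▸ ?_) hyw.symm (hw1 ▸ hyj)
    exact nonneg_of_adj_of_forall_reduced_dist_le (z := z) hμ hg hcl
      (fun v hv => hu.2.1 v hv (j + 1)) hw hwv fun a ha haw => hnonneg j a ha (by omega)

end Wave

theorem wavefront_pos_general (G : SimpleGraph V) [DecidableRel G.Adj] (B : Finset V)
    (μ : V → ℝ) (g : V → V → ℝ) (q : V → ℝ)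
    (hμ : ∀ v, 0 < μ v)
    (hgpos : ∀ a b, G.Adj a b → 0 < g a b)
    (hconnre : (reduced G B).Connected)
    (hadj : ∀ z ∈ B, ∀ a b : V, a ∉ B → b ∉ B → G.Adj a z → G.Adj b z → a ≠ b → G.Adj a b)
    (x z : V) (hx : x ∉ B) (hz : z ∈ B)
    (W : V → ℝ)
    (hWn : ∀ w ∈ B, nder G B μ g W w = 0)
    (hWz : W z = 0)
    (hWball : ∀ y, y ∉ B → (reduced G B).dist z y ≤ (reduced G B).dist x z →
      y ≠ x → W y = 0)
    (hWx : 0 < W x)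
    (u : V → ℕ → ℝ) (hu : IsWave G B μ g q W u) :
    2 ≤ (reduced G B).dist x z ∧
      (∀ t, t < (reduced G B).dist x z → u z t = 0) ∧
      0 < u z ((reduced G B).dist x z) := by
  set r := (reduced G B).dist x z
  have hxr : (reduced G B).dist z x = r := SimpleGraph.dist_comm
  have hr1 : 1 ≤ r := hconnre.pos_dist_of_ne fun h => hx (h ▸ hz)
  have hnbr (a : V) (ha : a ∉ B) (haz : G.Adj a z) : (reduced G B).dist z a ≤ 1 :=
    (SimpleGraph.dist_eq_one_iff_adj.mpr (reduced_adj_of_notMem ha haz).symm).le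
  have hr2 : 2 ≤ r := by
    by_contra! hr
    have hxz : G.Adj x z :=
      (SimpleGraph.dist_eq_one_iff_adj.mp (by omega : (reduced G B).dist z x = 1)).1.symm
    refine hWz.not_gt (pos_of_nder_eq_zero (hμ z) hgpos (hWn z hz) (fun a ha haz => ?_) hx hxz hWx)
    rcases eq_or_ne a x with rfl | hax
    · exact hWx.le
    · exact (hWball a ha ((hnbr a ha haz).trans hr1) hax).ge
  obtain ⟨y, hy, hyr, hyu⟩ :=
    hu.exists_pos_of_lt_reduced_dist hμ hgpos hadj hx hxr hWball hWx (r - 1) (by omega)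
  have hyz : G.Adj y z :=
    (SimpleGraph.dist_eq_one_iff_adj.mp (by omega : (reduced G B).dist z y = 1)).1.symm
  refine ⟨hr2, fun t ht => ?_, ?_⟩
  · refine eq_zero_of_nder_eq_zero (f := fun v => u v t) (hμ z) hgpos (hu.2.1 z hz t) hy hyz
      fun a ha haz => ?_
    have := hnbr a ha haz
    exact hu.eq_zero_of_add_reduced_dist_le hμ hgpos hadj hxr.ge hWball t a ha
      (by rintro rfl; omega) (by omega)
  · rw [show r = r - 1 + 1 by omega]
    refine pos_of_nder_eq_zero (f := fun v => u v (r - 1 + 1)) (hμ z) hgpos (hu.2.1 z hz _)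
      (fun a ha haz => ?_) hy hyz hyu
    have := hnbr a ha haz
    exact hu.nonneg_of_add_reduced_dist_le hμ hgpos hadj hxr.ge hWball hWx.le (r - 1) a ha
      (by omega)

/-- Wavefront lemma, first part: a wave generated by an initial value positive at `x`
and vanishing on the rest of the interior ball of radius `t₀ = d_re(x,z)` around a
boundary vertex `z` first reaches `z` exactly at time `t₀ ≥ 2`, with a positive value. -/
theorem wavefront_pos (G : SimpleGraph V) [DecidableRel G.Adj] (B : Finset V)
    (μ : V → ℝ) (g : V → V → ℝ) (q : V → ℝ)
    (hμ : ∀ v, 0 < μ v)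
    (hgpos : ∀ a b, G.Adj a b → 0 < g a b)
    (hgsymm : ∀ a b, g a b = g b a)
    (hconn : G.Connected)
    (hconnre : (reduced G B).Connected)
    (hadj : ∀ z ∈ B, ∀ a b : V, a ∉ B → b ∉ B → G.Adj a z → G.Adj b z → a ≠ b → G.Adj a b)
    (x z : V) (hx : x ∉ B) (hz : z ∈ B)
    (W : V → ℝ)
    (hWn : ∀ w ∈ B, nder G B μ g W w = 0)
    (hWz : W z = 0)
    (hWball : ∀ y, y ∉ B → (reduced G B).dist z y ≤ (reduced G B).dist x z →
      y ≠ x → W y = 0)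
    (hWx : 0 < W x)
    (u : V → ℕ → ℝ) (hu : IsWave G B μ g q W u) :
    2 ≤ (reduced G B).dist x z ∧
      (∀ t, t < (reduced G B).dist x z → u z t = 0) ∧
      0 < u z ((reduced G B).dist x z) :=
  wavefront_pos_general G B μ g q hμ hgpos hconnre hadj x z hx hz W hWn hWz hWball hWx u hu
end

section
/- If x ∈ G − N(∂G) is an interior vertex not adjacent to the boundary, then any nonzero initial value W in the space W(r_x) = {W : d_nu W|_{∂G} = 0, u^W(z,t) = 0 for all z ∈ ∂G, t < d(x,z)} has support exactly {x}, and moreover the boundary distance function r_x(z) = d(x,z) is a maximal element of the set U of functions s : ∂G → ℤ₊ with 2 ≤ s ≤ |G| and dim W(s) ≠ 0, under the pointwise partial order. -/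
/-!
The wave equation is solved by the leapfrog scheme on interior vertices, the boundary values
being forced by the Neumann condition; this solution is linear in the initial value and is the
only one. It propagates at unit speed: what starts at distance `d` from a boundary vertex `z`
is not seen at `z` before time `d`, while a unit impulse at `y₀` is seen at `z` at time
`d(y₀, z)` with a positive value, since every term of the scheme is nonnegative at the wave
front (interior neighbours of a boundary vertex being adjacent, the boundary never shortens
distances). Hence if `W ∈ 𝒲(s)` and `p` is the unique point of `supp W` closest to `z`, then
`s z ≤ d(p, z)`. For `s = r_x`, the Two-Points Condition applied to `supp W ∪ {x}` yields such
a `p ≠ x` with `d(p, z) < d(x, z)` unless `supp W = {x}`; the same inequality for `p = x` gives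
the maximality of `r_x`, and `δ_x ∈ 𝒲(r_x)` by finite speed of propagation.
-/

open Finset

variable {V : Type*} [Fintype V] [DecidableEq V]

/-- `W` belongs to the space `𝒲(s)` of initial values whose waves are not observed at
any boundary vertex `z` before time `s(z)`. -/
def InWs (G : SimpleGraph V) [DecidableRel G.Adj] (B : Finset V) (μ : V → ℝ)
    (g : V → V → ℝ) (q : V → ℝ) (s : V → ℕ) (W : V → ℝ) : Prop :=
  (∀ z ∈ B, nder G B μ g W z = 0) ∧
    ∀ u : V → ℕ → ℝ, IsWave G B μ g q W u → ∀ z ∈ B, ∀ t, t < s z → u z t = 0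

section Metric

omit [Fintype V] [DecidableEq V]

namespace SimpleGraph

variable {G : SimpleGraph V} {u v w : V}

lemma Adj.dist_le_dist_add_one (h : G.Adj v w) : G.dist u w ≤ G.dist u v + 1 := by
  rcases h.diff_dist_adj (u := u) with h | h | h <;> omega

lemma exists_adj_dist_eq_of_dist_eq_add_one {k : ℕ} (h : G.dist u v = k + 1) :
    ∃ a, G.Adj a v ∧ G.dist u a = k := by
  have hr : G.Reachable v u := (Reachable.of_dist_ne_zero (by omega : G.dist u v ≠ 0)).symm
  obtain ⟨p, hp⟩ := hr.exists_walk_length_eq_dist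
  rw [dist_comm, h] at hp
  cases p with
  | nil => simp at hp
  | cons hva p =>
    refine ⟨_, hva.symm, le_antisymm ?_ ?_⟩
    · have := dist_le p.reverse
      simp only [Walk.length_reverse, Walk.length_cons] at this hp
      omega
    · have := hva.symm.dist_le_dist_add_one (u := u)
      omega

lemma Connected.dist_lt_dist_of_edist_lt (hconn : G.Connected) (h : G.edist u v < G.edist u w) :
    G.dist u v < G.dist u w := by
  rwa [← (hconn u v).coe_dist_eq_edist, ← (hconn u w).coe_dist_eq_edist, Nat.cast_lt] at h

end SimpleGraph

variable {G : SimpleGraph V} {B : Finset V}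

def NoBoundaryEdges (G : SimpleGraph V) (B : Finset V) : Prop :=
  ∀ z ∈ B, ∀ w ∈ B, ¬ G.Adj z w

def InteriorNbrsAdjacent (G : SimpleGraph V) (B : Finset V) : Prop :=
  ∀ z ∈ B, ∀ a b : V, a ∉ B → b ∉ B → G.Adj a z → G.Adj b z → a ≠ b → G.Adj a b

lemma dist_le_dist_add_one_of_adj_boundary (hadj : InteriorNbrsAdjacent G B) {v y b z : V}
    (hy : y ∉ B) (hb : b ∉ B) (hz : z ∈ B) (hyz : G.Adj y z) (hbz : G.Adj b z) :
    G.dist v y ≤ G.dist v b + 1 := by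
  rcases eq_or_ne b y with rfl | hby
  · omega
  · exact (hadj z hz b y hb hy hbz hyz hby).dist_le_dist_add_one

lemma exists_adj_boundary_dist_eq (hconn : G.Connected) (hnoBB : NoBoundaryEdges G B)
    {x z : V} (hx : x ∉ B) (hz : z ∈ B) :
    ∃ a, G.Adj a z ∧ a ∉ B ∧ G.dist x a + 1 = G.dist x z := by
  obtain ⟨k, hk⟩ :=
    Nat.exists_eq_add_of_le' (hconn.pos_dist_of_ne (ne_of_mem_of_not_mem hz hx).symm)
  obtain ⟨a, haz, hak⟩ := G.exists_adj_dist_eq_of_dist_eq_add_one hk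
  exact ⟨a, haz, fun haB => hnoBB z hz a haB haz.symm, by omega⟩

lemma dist_le_dist_of_adj_boundary (hconn : G.Connected)
    (hadj : InteriorNbrsAdjacent G B) (hnoBB : NoBoundaryEdges G B)
    {x y z : V} (hx : x ∉ B) (hy : y ∉ B) (hz : z ∈ B) (hyz : G.Adj y z) :
    G.dist x y ≤ G.dist x z := by
  obtain ⟨a, haz, haB, hak⟩ := exists_adj_boundary_dist_eq hconn hnoBB hx hz
  have := dist_le_dist_add_one_of_adj_boundary (v := x) hadj hy haB hz hyz haz
  omega

end Metric

section Boundary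

variable {G : SimpleGraph V} {B : Finset V}

lemma range_dist_subset_image_dist (hconn : G.Connected)
    (hadj : InteriorNbrsAdjacent G B) (hnoBB : NoBoundaryEdges G B) {x v : V} (hx : x ∉ B)
    (hv : v ∉ B) : range (G.dist x v + 1) ⊆ Bᶜ.image (G.dist x) := by
  induction hk : G.dist x v generalizing v with
  | zero =>
    rw [zero_add, range_one, singleton_subset_iff]
    exact mem_image.2 ⟨v, mem_compl.2 hv, hk⟩
  | succ k ih =>
    obtain ⟨a, hav, hak⟩ := G.exists_adj_dist_eq_of_dist_eq_add_one hk
    have haB : a ∉ B := fun haB => by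
      have := dist_le_dist_of_adj_boundary hconn hadj hnoBB hx hv haB hav.symm
      omega
    rw [range_add_one, insert_subset_iff]
    exact ⟨mem_image.2 ⟨v, mem_compl.2 hv, hk⟩, ih haB hak⟩

lemma dist_le_card_compl (hconn : G.Connected)
    (hadj : InteriorNbrsAdjacent G B) (hnoBB : NoBoundaryEdges G B) {x z : V} (hx : x ∉ B)
    (hz : z ∈ B) : G.dist x z ≤ Bᶜ.card := by
  obtain ⟨a, -, haB, hak⟩ := exists_adj_boundary_dist_eq hconn hnoBB hx hz
  calc G.dist x z = (range (G.dist x a + 1)).card := by simp [hak]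
    _ ≤ (Bᶜ.image (G.dist x)).card :=
      card_le_card (range_dist_subset_image_dist hconn hadj hnoBB hx haB)
    _ ≤ Bᶜ.card := card_image_le

variable [DecidableRel G.Adj]

def interiorNbrs (G : SimpleGraph V) [DecidableRel G.Adj] (B : Finset V) (z : V) : Finset V :=
  univ.filter fun a => G.Adj a z ∧ a ∉ B

@[simp]
lemma mem_interiorNbrs {a z : V} : a ∈ interiorNbrs G B z ↔ G.Adj a z ∧ a ∉ B := by
  simp [interiorNbrs]

end Boundary

section Wave

variable (G : SimpleGraph V) [DecidableRel G.Adj] (B : Finset V) (μ : V → ℝ) (g : V → V → ℝ)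
  (q : V → ℝ)

noncomputable def interiorWeight (z : V) : ℝ :=
  ∑ a ∈ interiorNbrs G B z, g a z

noncomputable def boundaryAvg (f : V → ℝ) (z : V) : ℝ :=
  (interiorWeight G B g z)⁻¹ * ∑ a ∈ interiorNbrs G B z, g a z * f a

noncomputable def neumannExt (f : V → ℝ) : V → ℝ :=
  fun y => if y ∈ B then boundaryAvg G B g f y else f y

/-- The leapfrog scheme with `u 1 = u 0`. Only its interior values matter: `wave` recomputes
the boundary ones from them by `neumannExt`. -/
noncomputable def waveIter (W : V → ℝ) : ℕ → V → ℝ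
  | 0 => W
  | 1 => W
  | t + 2 => fun y => 2 * waveIter W (t + 1) y - waveIter W t y
      + lap G μ g (neumannExt G B g (waveIter W (t + 1))) y - q y * waveIter W (t + 1) y

noncomputable def wave (W : V → ℝ) (y : V) (t : ℕ) : ℝ :=
  neumannExt G B g (waveIter G B μ g q W t) y

variable {G B μ g q} {f f' h : V → ℝ} {y z : V}

lemma neumannExt_of_notMem (hy : y ∉ B) : neumannExt G B g f y = f y := if_neg hy

lemma neumannExt_of_mem (hz : z ∈ B) : neumannExt G B g f z = boundaryAvg G B g f z := if_pos hz

lemma interiorWeight_pos (hg : ∀ a b, G.Adj a b → 0 < g a b) (hconn : G.Connected)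
    (hnoBB : NoBoundaryEdges G B) {x : V} (hx : x ∉ B) (hz : z ∈ B) : 0 < interiorWeight G B g z :=
  let ⟨a, haz, haB, _⟩ := exists_adj_boundary_dist_eq hconn hnoBB hx hz
  sum_pos (fun b hb => hg b z (mem_interiorNbrs.1 hb).1) ⟨a, mem_interiorNbrs.2 ⟨haz, haB⟩⟩

lemma boundaryAvg_congr (h : ∀ a ∉ B, f a = f' a) :
    boundaryAvg G B g f z = boundaryAvg G B g f' z := by
  unfold boundaryAvg
  congr 1
  exact sum_congr rfl fun a ha => by rw [h a (mem_interiorNbrs.1 ha).2]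

lemma neumannExt_congr (h : ∀ a ∉ B, f a = f' a) : neumannExt G B g f = neumannExt G B g f' := by
  funext y
  unfold neumannExt
  split_ifs with hy
  exacts [boundaryAvg_congr h, h y hy]

lemma nder_eq (hw : interiorWeight G B g z ≠ 0) :
    nder G B μ g f z = (μ z)⁻¹ * interiorWeight G B g z * (boundaryAvg G B g f z - f z) := by
  rw [mul_assoc, mul_sub, boundaryAvg, mul_inv_cancel_left₀ hw, nder, interiorWeight, sum_mul,
    ← sum_sub_distrib]
  simp only [interiorNbrs, mul_sub]

lemma nder_eq_zero_iff (hμ : μ z ≠ 0) (hw : interiorWeight G B g z ≠ 0) :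
    nder G B μ g f z = 0 ↔ f z = boundaryAvg G B g f z := by
  rw [nder_eq hw]
  simp [hμ, hw, sub_eq_zero, eq_comm]

lemma nder_neumannExt (hw : interiorWeight G B g z ≠ 0) (hz : z ∈ B) :
    nder G B μ g (neumannExt G B g f) z = 0 := by
  rw [nder_eq hw, neumannExt_of_mem hz, boundaryAvg_congr fun a ha => neumannExt_of_notMem ha,
    sub_self, mul_zero]

lemma neumannExt_eq_self (hμ : ∀ z ∈ B, μ z ≠ 0) (hw : ∀ z ∈ B, interiorWeight G B g z ≠ 0)
    (hf : ∀ z ∈ B, nder G B μ g f z = 0) : neumannExt G B g f = f := by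
  funext y
  by_cases hy : y ∈ B
  · rw [neumannExt_of_mem hy, ← (nder_eq_zero_iff (hμ y hy) (hw y hy)).1 (hf y hy)]
  · exact neumannExt_of_notMem hy

lemma isWave_wave (hμ : ∀ z ∈ B, μ z ≠ 0) (hw : ∀ z ∈ B, interiorWeight G B g z ≠ 0)
    {W : V → ℝ} (hW : ∀ z ∈ B, nder G B μ g W z = 0) : IsWave G B μ g q W (wave G B μ g q W) := by
  refine ⟨fun y hy t ht => ?_, fun z hz t => nder_neumannExt (hw z hz) hz, fun y _ => rfl,
    fun y => congrFun (neumannExt_eq_self hμ hw hW) y⟩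
  obtain ⟨t, rfl⟩ := Nat.exists_eq_add_of_le' ht
  simp only [wave, neumannExt_of_notMem hy, Nat.add_sub_cancel, waveIter]
  ring

lemma IsWave.eq_wave (hμ : ∀ z ∈ B, μ z ≠ 0) (hw : ∀ z ∈ B, interiorWeight G B g z ≠ 0)
    {W : V → ℝ} {u : V → ℕ → ℝ} (hu : IsWave G B μ g q W u) (y : V) (t : ℕ) :
    u y t = wave G B μ g q W y t := by
  obtain ⟨hrec, hneu, hinit₁, hinit₀⟩ := hu
  have hext : ∀ t, (∀ y ∉ B, u y t = waveIter G B μ g q W t y) →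
      (fun y => u y t) = neumannExt G B g (waveIter G B μ g q W t) := fun t ht => by
    rw [← neumannExt_eq_self hμ hw (hneu · · t)]
    exact neumannExt_congr ht
  have hint : ∀ y ∉ B, u y t = waveIter G B μ g q W t y := by
    induction t using Nat.twoStepInduction with
    | zero => exact fun y _ => hinit₀ y
    | one => exact fun y hy => (hinit₁ y hy).trans (hinit₀ y)
    | more t ih₀ ih₁ =>
      intro y hy
      have := hrec y hy (t + 1) le_add_self
      rw [Nat.add_sub_cancel, hext (t + 1) ih₁, ih₀ y hy, ih₁ y hy] at this
      rw [waveIter]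
      linarith
  exact congrFun (hext t hint) y

end Wave

section Linearity

variable {G : SimpleGraph V} [DecidableRel G.Adj] {B : Finset V} {μ : V → ℝ} {g : V → V → ℝ}
  {q : V → ℝ} (c : ℝ) (f h : V → ℝ)

omit [DecidableEq V] in
lemma lap_smul_add (y : V) : lap G μ g (c • f + h) y = c * lap G μ g f y + lap G μ g h y := by
  simp only [lap, mul_sum, ← sum_add_distrib]
  exact sum_congr rfl fun a _ => by simp only [Pi.add_apply, Pi.smul_apply, smul_eq_mul]; ring

lemma boundaryAvg_smul_add (z : V) :
    boundaryAvg G B g (c • f + h) z = c * boundaryAvg G B g f z + boundaryAvg G B g h z := by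
  simp only [boundaryAvg, mul_sum, ← sum_add_distrib]
  exact sum_congr rfl fun a _ => by simp only [Pi.add_apply, Pi.smul_apply, smul_eq_mul]; ring

lemma neumannExt_smul_add :
    neumannExt G B g (c • f + h) = c • neumannExt G B g f + neumannExt G B g h := by
  funext y
  by_cases hy : y ∈ B
  · simp only [neumannExt_of_mem hy, boundaryAvg_smul_add, Pi.add_apply, Pi.smul_apply, smul_eq_mul]
  · simp only [neumannExt_of_notMem hy, Pi.add_apply, Pi.smul_apply]

lemma waveIter_smul_add (t : ℕ) :
    waveIter G B μ g q (c • f + h) t = c • waveIter G B μ g q f t + waveIter G B μ g q h t := by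
  induction t using Nat.twoStepInduction with
  | zero | one => rfl
  | more t ih₀ ih₁ =>
    funext y
    simp only [waveIter, ih₀, ih₁, neumannExt_smul_add, lap_smul_add, Pi.add_apply,
      Pi.smul_apply, smul_eq_mul]
    ring

lemma wave_smul_add (y : V) (t : ℕ) :
    wave G B μ g q (c • f + h) y t = c * wave G B μ g q f y t + wave G B μ g q h y t := by
  simp only [wave, waveIter_smul_add, neumannExt_smul_add, Pi.add_apply, Pi.smul_apply, smul_eq_mul]

end Linearity

section Propagation

variable {G : SimpleGraph V} [DecidableRel G.Adj] {B : Finset V} {μ : V → ℝ} {g : V → V → ℝ}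
  {q : V → ℝ} {f : V → ℝ} {y z : V}

omit [DecidableEq V] in
lemma lap_eq_zero (hf : ∀ a, G.Adj y a → f a = f y) : lap G μ g f y = 0 := by
  rw [lap, sum_eq_zero fun a ha => by rw [hf a (mem_filter.1 ha).2, sub_self, mul_zero], mul_zero]

lemma boundaryAvg_eq_zero (hf : ∀ a ∈ interiorNbrs G B z, f a = 0) : boundaryAvg G B g f z = 0 := by
  rw [boundaryAvg, sum_eq_zero fun a ha => by rw [hf a ha, mul_zero], mul_zero]

omit [DecidableEq V] in
lemma lap_pos (hμ : 0 < μ y) (hg : ∀ a, G.Adj y a → 0 < g y a) (hf : ∀ a, G.Adj y a → f y ≤ f a)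
    {a₀ : V} (ha₀ : G.Adj y a₀) (hlt : f y < f a₀) : 0 < lap G μ g f y :=
  mul_pos (inv_pos.2 hμ) <| sum_pos'
    (fun a ha => mul_nonneg (hg a (mem_filter.1 ha).2).le (sub_nonneg.2 (hf a (mem_filter.1 ha).2)))
    ⟨a₀, mem_filter.2 ⟨mem_univ _, ha₀⟩, mul_pos (hg a₀ ha₀) (sub_pos.2 hlt)⟩

lemma boundaryAvg_nonneg (hg : ∀ a ∈ interiorNbrs G B z, 0 ≤ g a z)
    (hf : ∀ a ∈ interiorNbrs G B z, 0 ≤ f a) : 0 ≤ boundaryAvg G B g f z :=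
  mul_nonneg (inv_nonneg.2 (sum_nonneg hg)) (sum_nonneg fun a ha => mul_nonneg (hg a ha) (hf a ha))

lemma boundaryAvg_pos (hg : ∀ a ∈ interiorNbrs G B z, 0 < g a z)
    (hf : ∀ a ∈ interiorNbrs G B z, 0 ≤ f a) {a₀ : V} (ha₀ : a₀ ∈ interiorNbrs G B z)
    (hpos : 0 < f a₀) : 0 < boundaryAvg G B g f z :=
  mul_pos (inv_pos.2 (sum_pos (fun a ha => hg a ha) ⟨a₀, ha₀⟩)) <|
    sum_pos' (fun a ha => mul_nonneg (hg a ha).le (hf a ha)) ⟨a₀, ha₀, mul_pos (hg a₀ ha₀) hpos⟩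

lemma waveIter_eq_zero_of_le_dist (hadj : InteriorNbrsAdjacent G B)
    {W : V → ℝ} {t : ℕ} (hy : y ∉ B) (hfar : ∀ v ∈ Function.support W, max t 1 ≤ G.dist v y) :
    waveIter G B μ g q W t y = 0 := by
  induction t using Nat.twoStepInduction generalizing y with
  | zero | one => exact Function.notMem_support.1 fun hy => by simpa using hfar y hy
  | more t ih₀ ih₁ =>
    have hfar' : ∀ v ∈ Function.support W, t + 2 ≤ G.dist v y := fun v hv => by
      simpa using hfar v hv
    have hnear : ∀ b ∉ B, (∀ v, G.dist v y ≤ G.dist v b + 1) → waveIter G B μ g q W (t + 1) b = 0 :=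
      fun b hb hby => ih₁ hb fun v hv => by have := hby v; have := hfar' v hv; omega
    have hy₁ := hnear y hy fun v => by omega
    have hy₀ : waveIter G B μ g q W t y = 0 := ih₀ hy fun v hv => by have := hfar' v hv; omega
    have hlap : lap G μ g (neumannExt G B g (waveIter G B μ g q W (t + 1))) y = 0 := by
      refine lap_eq_zero fun a hya => ?_
      rw [neumannExt_of_notMem hy, hy₁]
      by_cases ha : a ∈ B
      · exact (neumannExt_of_mem ha).trans <| boundaryAvg_eq_zero fun b hb =>
          hnear b (mem_interiorNbrs.1 hb).2 fun v => dist_le_dist_add_one_of_adj_boundary hadj hy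
            (mem_interiorNbrs.1 hb).2 ha hya (mem_interiorNbrs.1 hb).1
      · exact (neumannExt_of_notMem ha).trans <| hnear a ha fun v => hya.symm.dist_le_dist_add_one
    simp only [waveIter, hy₀, hy₁, hlap]
    ring

lemma wave_eq_zero_of_lt_dist (hadj : InteriorNbrsAdjacent G B)
    {W : V → ℝ} {t : ℕ} (hz : z ∈ B) (hfar : ∀ v ∈ Function.support W, t + 1 < G.dist v z) :
    wave G B μ g q W z (t + 1) = 0 := by
  rw [wave, neumannExt_of_mem hz]
  refine boundaryAvg_eq_zero fun a ha => waveIter_eq_zero_of_le_dist hadj (mem_interiorNbrs.1 ha).2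
    fun v hv => ?_
  have := (mem_interiorNbrs.1 ha).1.dist_le_dist_add_one (u := v)
  have := hfar v hv
  omega

end Propagation

section Arrival

variable {G : SimpleGraph V} [DecidableRel G.Adj] {B : Finset V} {μ : V → ℝ} {g : V → V → ℝ}
  {q : V → ℝ} {y₀ y z : V} {k t : ℕ}

lemma waveIter_single_eq_zero (hadj : InteriorNbrsAdjacent G B)
    (hy : y ∉ B) (h : max t 1 ≤ G.dist y₀ y) : waveIter G B μ g q (Pi.single y₀ 1) t y = 0 :=
  waveIter_eq_zero_of_le_dist hadj hy fun v hv => by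
    rw [Pi.support_single_of_ne one_ne_zero, Set.mem_singleton_iff] at hv
    exact hv ▸ h

lemma waveIter_single_nonneg (hadj : InteriorNbrsAdjacent G B)
    (hfront : ∀ y ∉ B, G.dist y₀ y = k → 0 < waveIter G B μ g q (Pi.single y₀ 1) (k + 1) y)
    (hy : y ∉ B) (hk : k ≤ G.dist y₀ y) : 0 ≤ waveIter G B μ g q (Pi.single y₀ 1) (k + 1) y := by
  rcases hk.eq_or_lt with hk | hk
  · exact (hfront y hy hk.symm).le
  · exact (waveIter_single_eq_zero hadj hy (by omega)).ge

lemma neumannExt_waveIter_single_nonneg (hg : ∀ a b, G.Adj a b → 0 < g a b)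
    (hadj : InteriorNbrsAdjacent G B)
    (hfront : ∀ y ∉ B, G.dist y₀ y = k → 0 < waveIter G B μ g q (Pi.single y₀ 1) (k + 1) y)
    (hk : k ≤ G.dist y₀ y) (hkB : y ∈ B → k + 1 ≤ G.dist y₀ y) :
    0 ≤ neumannExt G B g (waveIter G B μ g q (Pi.single y₀ 1) (k + 1)) y := by
  by_cases hy : y ∈ B
  · rw [neumannExt_of_mem hy]
    refine boundaryAvg_nonneg (fun b hb => (hg b y (mem_interiorNbrs.1 hb).1).le) fun b hb =>
      waveIter_single_nonneg hadj hfront (mem_interiorNbrs.1 hb).2 ?_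
    have := (mem_interiorNbrs.1 hb).1.dist_le_dist_add_one (u := y₀)
    have := hkB hy
    omega
  · exact (neumannExt_of_notMem hy).trans_ge (waveIter_single_nonneg hadj hfront hy hk)

lemma waveIter_single_pos (hμ : ∀ v, 0 < μ v) (hg : ∀ a b, G.Adj a b → 0 < g a b)
    (hconn : G.Connected)
    (hadj : InteriorNbrsAdjacent G B) (hnoBB : NoBoundaryEdges G B) (hy₀ : y₀ ∉ B) (k : ℕ) :
    ∀ y ∉ B, G.dist y₀ y = k → 0 < waveIter G B μ g q (Pi.single y₀ 1) (k + 1) y := by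
  induction k with
  | zero =>
    intro y _ hy
    simp [waveIter, hconn.dist_eq_zero_iff.1 hy]
  | succ k ih =>
    intro y hy hk
    have h₁ : waveIter G B μ g q (Pi.single y₀ 1) (k + 1) y = 0 :=
      waveIter_single_eq_zero hadj hy (by omega)
    have h₀ : waveIter G B μ g q (Pi.single y₀ 1) k y = 0 :=
      waveIter_single_eq_zero hadj hy (by omega)
    obtain ⟨a₀, ha₀y, ha₀k⟩ := G.exists_adj_dist_eq_of_dist_eq_add_one hk
    have ha₀ : a₀ ∉ B := fun ha₀ => by
      have := dist_le_dist_of_adj_boundary hconn hadj hnoBB hy₀ hy ha₀ ha₀y.symm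
      omega
    have hlap :
        0 < lap G μ g (neumannExt G B g (waveIter G B μ g q (Pi.single y₀ 1) (k + 1))) y := by
      refine lap_pos (hμ y) (hg y) (fun a hya => ?_) ha₀y.symm ?_
      · rw [neumannExt_of_notMem hy, h₁]
        refine neumannExt_waveIter_single_nonneg hg hadj ih ?_ fun ha => ?_
        · have := hya.symm.dist_le_dist_add_one (u := y₀)
          omega
        · have := dist_le_dist_of_adj_boundary hconn hadj hnoBB hy₀ hy ha hya
          omega
      · rw [neumannExt_of_notMem hy, neumannExt_of_notMem ha₀, h₁]
        exact ih a₀ ha₀ ha₀k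
    simp only [waveIter, h₀, h₁]
    linarith

lemma wave_single_pos (hμ : ∀ v, 0 < μ v) (hg : ∀ a b, G.Adj a b → 0 < g a b)
    (hconn : G.Connected)
    (hadj : InteriorNbrsAdjacent G B) (hnoBB : NoBoundaryEdges G B) (hy₀ : y₀ ∉ B) (hz : z ∈ B)
    (hk : G.dist y₀ z = k + 1) : 0 < wave G B μ g q (Pi.single y₀ 1) z (k + 1) := by
  have hfront := waveIter_single_pos (q := q) hμ hg hconn hadj hnoBB hy₀ k
  obtain ⟨a₀, ha₀z, ha₀k⟩ := G.exists_adj_dist_eq_of_dist_eq_add_one hk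
  have ha₀ : a₀ ∈ interiorNbrs G B z :=
    mem_interiorNbrs.2 ⟨ha₀z, fun ha₀ => hnoBB z hz a₀ ha₀ ha₀z.symm⟩
  rw [wave, neumannExt_of_mem hz]
  refine boundaryAvg_pos (fun b hb => hg b z (mem_interiorNbrs.1 hb).1) (fun b hb => ?_) ha₀
    (hfront a₀ (mem_interiorNbrs.1 ha₀).2 ha₀k)
  refine waveIter_single_nonneg hadj hfront (mem_interiorNbrs.1 hb).2 ?_
  have := (mem_interiorNbrs.1 hb).1.dist_le_dist_add_one (u := y₀)
  omega

end Arrival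

section Observation

variable {G : SimpleGraph V} [DecidableRel G.Adj] {B : Finset V} {μ : V → ℝ} {g : V → V → ℝ}
  {q : V → ℝ} {s : V → ℕ} {W : V → ℝ}

lemma wave_ne_zero_of_closest (hμ : ∀ v, 0 < μ v) (hg : ∀ a b, G.Adj a b → 0 < g a b)
    (hconn : G.Connected)
    (hadj : InteriorNbrsAdjacent G B) (hnoBB : NoBoundaryEdges G B) {y₀ z : V} (hy₀ : y₀ ∉ B)
    (hWy₀ : W y₀ ≠ 0)
    (hz : z ∈ B) (hclosest : ∀ v ∈ Function.support W, v ≠ y₀ → G.dist y₀ z < G.dist v z) :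
    wave G B μ g q W z (G.dist y₀ z) ≠ 0 := by
  obtain ⟨k, hk⟩ :=
    Nat.exists_eq_add_of_le' (hconn.pos_dist_of_ne (ne_of_mem_of_not_mem hz hy₀).symm)
  set W' := W - W y₀ • Pi.single y₀ 1
  have hW : W = W y₀ • Pi.single y₀ 1 + W' := (add_sub_cancel _ _).symm
  have hW' : wave G B μ g q W' z (k + 1) = 0 := wave_eq_zero_of_lt_dist hadj hz fun v hv => by
    have hvy₀ : v ≠ y₀ := by rintro rfl; simp [W'] at hv
    have hvW : v ∈ Function.support W := by simpa [W', hvy₀] using hv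
    have := hclosest v hvW hvy₀
    omega
  rw [hk, hW, wave_smul_add, hW', add_zero]
  exact mul_ne_zero hWy₀ (wave_single_pos hμ hg hconn hadj hnoBB hy₀ hz hk).ne'

lemma InWs.le_dist_of_closest (hμ : ∀ v, 0 < μ v) (hg : ∀ a b, G.Adj a b → 0 < g a b)
    (hconn : G.Connected) (hadj : InteriorNbrsAdjacent G B) (hnoBB : NoBoundaryEdges G B)
    (hW : InWs G B μ g q s W) {p z : V}
    (hp : p ∈ Function.support W) (hpB : p ∉ B) (hz : z ∈ B)
    (hclosest : ∀ v ∈ Function.support W, v ≠ p → G.dist p z < G.dist v z) :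
    s z ≤ G.dist p z := by
  have hw : ∀ z ∈ B, interiorWeight G B g z ≠ 0 := fun z hz =>
    (interiorWeight_pos hg hconn hnoBB hpB hz).ne'
  have hwave := isWave_wave (q := q) (fun z _ => (hμ z).ne') hw hW.1
  by_contra! h
  exact wave_ne_zero_of_closest hμ hg hconn hadj hnoBB hpB hp hz hclosest (hW.2 _ hwave z hz _ h)

lemma InWs.mono (hW : InWs G B μ g q s W) {s' : V → ℕ} (hs : ∀ z ∈ B, s' z ≤ s z) :
    InWs G B μ g q s' W :=
  ⟨hW.1, fun u hu z hz t ht => hW.2 u hu z hz t (ht.trans_le (hs z hz))⟩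

omit [Fintype V] [DecidableEq V] [DecidableRel G.Adj] in
lemma TwoPoints.exists_extremePt_ne (hTP : TwoPoints G B) {S : Finset V} (hS : ∀ v ∈ S, v ∉ B)
    (hcard : 2 ≤ S.card) (x : V) : ∃ p, p ≠ x ∧ ExtremePt G B S p := by
  obtain ⟨x₀, x₁, hne, h₀, h₁⟩ := hTP S hS hcard
  rcases eq_or_ne x₀ x with rfl | hx₀
  · exact ⟨x₁, hne.symm, h₁⟩
  · exact ⟨x₀, hx₀, h₀⟩

lemma InWs.support_eq_singleton (hμ : ∀ v, 0 < μ v) (hg : ∀ a b, G.Adj a b → 0 < g a b)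
    (hconn : G.Connected) (hTP : TwoPoints G B)
    (hadj : InteriorNbrsAdjacent G B) (hnoBB : NoBoundaryEdges G B) {x : V} (hx : x ∉ B)
    (hW : InWs G B μ g q (G.dist x) W) (hW0 : W ≠ 0) : Function.support W = {x} := by
  have hw : ∀ z ∈ B, interiorWeight G B g z ≠ 0 := fun z hz =>
    (interiorWeight_pos hg hconn hnoBB hx hz).ne'
  have hwave := isWave_wave (q := q) (fun z _ => (hμ z).ne') hw hW.1
  have hint : ∀ v ∈ Function.support W, v ∉ B := fun v hv hvB => hv <|
    (hwave.2.2.2 v).symm.trans <|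
      hW.2 _ hwave v hvB 0 (hconn.pos_dist_of_ne (ne_of_mem_of_not_mem hvB hx).symm)
  have hsub : Function.support W ⊆ {x} := by
    intro y hy
    by_contra hyx
    set S := insert x (univ.filter (W · ≠ 0))
    have hS : ∀ v ∈ S, v ∉ B := by
      rintro v hv
      rcases mem_insert.1 hv with rfl | hv
      exacts [hx, hint v (by simpa using hv)]
    have hcard : 2 ≤ S.card := one_lt_card.2
      ⟨x, mem_insert_self _ _, y, mem_insert_of_mem (by simpa using hy), Ne.symm hyx⟩
    obtain ⟨p, hpx, hpS, z, hz, hclosest⟩ := hTP.exists_extremePt_ne hS hcard x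
    have hp : p ∈ Function.support W := by simpa [S, hpx] using hpS
    have hclosest' : ∀ v ∈ S, v ≠ p → G.dist p z < G.dist v z := fun v hv hvp => by
      simpa only [SimpleGraph.dist_comm (v := z)] using
        hconn.dist_lt_dist_of_edist_lt (hclosest v hv hvp)
    have := hW.le_dist_of_closest hμ hg hconn hadj hnoBB hp (hint p hp) hz fun v hv =>
      hclosest' v (mem_insert_of_mem (by simpa using hv))
    have := hclosest' x (mem_insert_self _ _) hpx.symm
    omega
  rcases Set.subset_singleton_iff_eq.1 hsub with h | h
  · exact absurd (Function.support_eq_empty_iff.1 h) hW0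
  · exact h

lemma inWs_dist_single (hμ : ∀ v, 0 < μ v) (hg : ∀ a b, G.Adj a b → 0 < g a b)
    (hconn : G.Connected)
    (hadj : InteriorNbrsAdjacent G B) (hnoBB : NoBoundaryEdges G B) {x : V} (hx : x ∉ B)
    (hxfar : ∀ z ∈ B, ¬ G.Adj x z) : InWs G B μ g q (G.dist x) (Pi.single x 1) := by
  refine ⟨fun z hz => ?_, fun u hu z hz t ht => ?_⟩
  · rw [nder, Pi.single_eq_of_ne (ne_of_mem_of_not_mem hz hx), sum_eq_zero fun a ha => ?_, mul_zero]
    have hax : a ≠ x := by rintro rfl; exact hxfar z hz (mem_filter.1 ha).2.1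
    rw [Pi.single_eq_of_ne hax, sub_zero, mul_zero]
  cases t with
  | zero => rw [hu.2.2.2, Pi.single_eq_of_ne (ne_of_mem_of_not_mem hz hx)]
  | succ t =>
    have hw : ∀ z ∈ B, interiorWeight G B g z ≠ 0 := fun z hz =>
      (interiorWeight_pos hg hconn hnoBB hx hz).ne'
    rw [hu.eq_wave (fun z _ => (hμ z).ne') hw]
    refine wave_eq_zero_of_lt_dist hadj hz fun v hv => ?_
    rw [Pi.support_single_of_ne one_ne_zero, Set.mem_singleton_iff] at hv
    exact hv ▸ ht

end Observation

theorem boundary_distance_maximal_general (G : SimpleGraph V) [DecidableRel G.Adj] (B : Finset V)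
    (μ : V → ℝ) (g : V → V → ℝ) (q : V → ℝ)
    (hμ : ∀ v, 0 < μ v)
    (hgpos : ∀ a b, G.Adj a b → 0 < g a b)
    (hconn : G.Connected)
    (hTP : TwoPoints G B)
    (hadj : ∀ z ∈ B, ∀ a b : V, a ∉ B → b ∉ B → G.Adj a z → G.Adj b z → a ≠ b → G.Adj a b)
    (hnoBB : ∀ z ∈ B, ∀ w ∈ B, ¬ G.Adj z w)
    (x : V) (hx : x ∉ B) (hxfar : ∀ z ∈ B, ¬ G.Adj x z) :
    (∀ W : V → ℝ, W ≠ 0 → InWs G B μ g q (fun z => G.dist x z) W →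
        ∀ y, W y ≠ 0 ↔ y = x) ∧
    ((∀ z ∈ B, 2 ≤ G.dist x z ∧ G.dist x z ≤ (Bᶜ : Finset V).card) ∧
      ∃ W : V → ℝ, W ≠ 0 ∧ InWs G B μ g q (fun z => G.dist x z) W) ∧
    (∀ s : V → ℕ,
      ((∀ z ∈ B, 2 ≤ s z ∧ s z ≤ (Bᶜ : Finset V).card) ∧
        ∃ W : V → ℝ, W ≠ 0 ∧ InWs G B μ g q s W) →
      (∀ z ∈ B, G.dist x z ≤ s z) → ∀ z ∈ B, s z = G.dist x z) := by
  have hsupp : ∀ W : V → ℝ, W ≠ 0 → InWs G B μ g q (fun z => G.dist x z) W →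
      Function.support W = {x} := fun W hW0 hW =>
    hW.support_eq_singleton hμ hgpos hconn hTP hadj hnoBB hx hW0
  refine ⟨fun W hW0 hW y => by rw [← Function.mem_support, hsupp W hW0 hW, Set.mem_singleton_iff],
    ⟨fun z hz => ⟨hconn.one_lt_dist_of_ne_of_not_adj (ne_of_mem_of_not_mem hz hx).symm (hxfar z hz),
      dist_le_card_compl hconn hadj hnoBB hx hz⟩,
    Pi.single x 1, Pi.single_ne_zero_iff.2 one_ne_zero,
      inWs_dist_single hμ hgpos hconn hadj hnoBB hx hxfar⟩, ?_⟩
  rintro s ⟨-, W, hW0, hW⟩ hle z hz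
  have hWx := hsupp W hW0 (hW.mono hle)
  refine le_antisymm ?_ (hle z hz)
  exact hW.le_dist_of_closest hμ hgpos hconn hadj hnoBB (hWx ▸ rfl) hx hz fun v hv hvx =>
    absurd (Set.eq_of_mem_singleton (hWx ▸ hv)) hvx

/-- For an interior vertex `x` not adjacent to the boundary, any nonzero initial value in
`𝒲(r_x)` is supported exactly at `x`, and the boundary distance function `r_x` is a
maximal element of the set `𝒰`. -/
theorem boundary_distance_maximal (G : SimpleGraph V) [DecidableRel G.Adj] (B : Finset V)
    (μ : V → ℝ) (g : V → V → ℝ) (q : V → ℝ)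
    (hμ : ∀ v, 0 < μ v)
    (hgpos : ∀ a b, G.Adj a b → 0 < g a b)
    (hgsymm : ∀ a b, g a b = g b a)
    (hconn : G.Connected)
    (hTP : TwoPoints G B)
    (hadj : ∀ z ∈ B, ∀ a b : V, a ∉ B → b ∉ B → G.Adj a z → G.Adj b z → a ≠ b → G.Adj a b)
    (hnoBB : ∀ z ∈ B, ∀ w ∈ B, ¬ G.Adj z w)
    (x : V) (hx : x ∉ B) (hxfar : ∀ z ∈ B, ¬ G.Adj x z) :
    (∀ W : V → ℝ, W ≠ 0 → InWs G B μ g q (fun z => G.dist x z) W →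
        ∀ y, W y ≠ 0 ↔ y = x) ∧
    ((∀ z ∈ B, 2 ≤ G.dist x z ∧ G.dist x z ≤ (Bᶜ : Finset V).card) ∧
      ∃ W : V → ℝ, W ≠ 0 ∧ InWs G B μ g q (fun z => G.dist x z) W) ∧
    (∀ s : V → ℕ,
      ((∀ z ∈ B, 2 ≤ s z ∧ s z ≤ (Bᶜ : Finset V).card) ∧
        ∃ W : V → ℝ, W ≠ 0 ∧ InWs G B μ g q s W) →
      (∀ z ∈ B, G.dist x z ≤ s z) → ∀ z ∈ B, s z = G.dist x z) :=
  boundary_distance_maximal_general G B μ g q hμ hgpos hconn hTP hadj hnoBB x hx hxfar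
end

section
/- Edge detection between interior vertices via waves: let G be a finite weighted graph with boundary such that interior neighbors of a common boundary vertex are adjacent, and let x, y ∈ G. Then x ~ y if and only if the minimum over t ∈ ℕ of times with ⟨u^{W_x}(·,t), W_y⟩_{L²(G)} ≠ 0 equals 2, where W_x, W_y are Neumann initial values supported (in the interior) exactly at x and y respectively with positive value there. -/
/-! At interior vertices the wave started at `x` stays equal to `W_x` for `t ≤ 1`, and the
Neumann condition makes its value at a boundary vertex `z` at time `1` a positive multiple of
`g x z * W_x x`: nonnegative, and zero unless `x ~ z`. At time `2` an interior `p ≠ x`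
therefore receives only nonnegative contributions from its neighbours, a positive one exactly
when `p ~ x`; a path `p ~ z ~ x` through a boundary vertex `z` would force `p ~ x` by the
hypothesis on boundary vertices. Pairing with `W_y` reads off `u(y, t)`, which vanishes at
`t = 0, 1` exactly when `y ≠ x`. -/

open Finset

variable {V : Type*} [Fintype V] [DecidableEq V]

theorem Nat.sInf_setOf_eq_iff {P : ℕ → Prop} {m : ℕ} (hm : m ≠ 0) :
    sInf {n | P n} = m ↔ P m ∧ ∀ n < m, ¬P n := by
  classical
  by_cases h : ∃ n, P n
  · exact (Nat.sInf_def h).symm ▸ Nat.find_eq_iff h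
  · simp only [not_exists] at h
    simp only [h, Set.ofPred_false, Nat.sInf_empty, false_and, iff_false]
    exact hm.symm

section Wave

variable {G : SimpleGraph V} [DecidableRel G.Adj] {B : Finset V} {μ : V → ℝ} {g : V → V → ℝ}

theorem nder_eq_zero_iff_s18 {u : V → ℝ} {z : V} (hμ : μ z ≠ 0) :
    nder G B μ g u z = 0 ↔
      (∑ w ∈ univ.filter (fun w => G.Adj w z ∧ w ∉ B), g w z) * u z =
        ∑ w ∈ univ.filter (fun w => G.Adj w z ∧ w ∉ B), g w z * u w := by
  rw [nder, mul_eq_zero, or_iff_right (inv_ne_zero hμ)]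
  simp only [mul_sub, Finset.sum_sub_distrib, Finset.sum_mul]
  rw [sub_eq_zero, eq_comm]

theorem sum_weight_pos (hg : ∀ a b, G.Adj a b → 0 < g a b) {z p : V} (hp : p ∉ B)
    (hpz : G.Adj p z) : 0 < ∑ w ∈ univ.filter (fun w => G.Adj w z ∧ w ∉ B), g w z :=
  Finset.sum_pos' (fun w hw => (hg _ _ (mem_filter.1 hw).2.1).le)
    ⟨p, by simp [hpz, hp], hg _ _ hpz⟩

namespace IsWave

variable {q W : V → ℝ} {u : V → ℕ → ℝ}

theorem mul_apply_two (hu : IsWave G B μ g q W u) {p : V} (hp : p ∉ B) (hμ : μ p ≠ 0)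
    (h0 : u p 0 = 0) (h1 : u p 1 = 0) :
    μ p * u p 2 = ∑ w ∈ univ.filter (fun w => G.Adj p w), g p w * u w 1 := by
  have h := hu.1 p hp 1 le_rfl
  simp only [lap, h0, h1, sub_zero, mul_zero, add_zero] at h
  rw [sub_eq_zero] at h
  rw [h, ← mul_assoc, mul_inv_cancel₀ hμ, one_mul]

variable {x : V}

theorem apply_of_le_one (hu : IsWave G B μ g q W u) (hW : ∀ p, p ∉ B → p ≠ x → W p = 0)
    {p : V} (hp : p ∉ B) {t : ℕ} (ht : t ≤ 1) : u p t = if p = x then W x else 0 := by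
  have hpt : u p t = W p := by
    interval_cases t
    · exact hu.2.2.2 p
    · exact (hu.2.2.1 p hp).trans (hu.2.2.2 p)
  split_ifs with hpx
  · rw [hpt, hpx]
  · rw [hpt, hW p hp hpx]

theorem apply_of_le_one_of_ne (hu : IsWave G B μ g q W u) (hW : ∀ p, p ∉ B → p ≠ x → W p = 0)
    {p : V} (hp : p ∉ B) (hpx : p ≠ x) {t : ℕ} (ht : t ≤ 1) : u p t = 0 := by
  rw [hu.apply_of_le_one hW hp ht, if_neg hpx]

theorem mul_apply_one_of_mem (hu : IsWave G B μ g q W u) (hμ : ∀ v, μ v ≠ 0) (hx : x ∉ B)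
    (hW : ∀ p, p ∉ B → p ≠ x → W p = 0) {z : V} (hz : z ∈ B) :
    (∑ w ∈ univ.filter (fun w => G.Adj w z ∧ w ∉ B), g w z) * u z 1 =
      if G.Adj x z then g x z * W x else 0 := by
  rw [(nder_eq_zero_iff_s18 (hμ z)).1 (hu.2.1 z hz 1)]
  rw [Finset.sum_congr rfl fun w hw => by
    rw [hu.apply_of_le_one hW (mem_filter.1 hw).2.2 le_rfl, mul_ite, mul_zero]]
  rw [Finset.sum_ite_eq']
  simp [hx]

theorem apply_one_nonneg_of_adj (hu : IsWave G B μ g q W u) (hμ : ∀ v, μ v ≠ 0)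
    (hg : ∀ a b, G.Adj a b → 0 < g a b) (hx : x ∉ B) (hW : ∀ p, p ∉ B → p ≠ x → W p = 0)
    (hWx : 0 ≤ W x) {p w : V} (hp : p ∉ B) (hpw : G.Adj p w) : 0 ≤ u w 1 := by
  by_cases hw : w ∈ B
  · refine (mul_nonneg_iff_of_pos_left (sum_weight_pos hg hp hpw)).1 ?_
    rw [hu.mul_apply_one_of_mem hμ hx hW hw]
    split_ifs with hxw
    · exact mul_nonneg (hg _ _ hxw).le hWx
    · exact le_rfl
  · rw [hu.apply_of_le_one hW hw le_rfl]
    split_ifs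
    · exact hWx
    · exact le_rfl

/-- At a boundary neighbour `w` of `p` the signal could only come from `x ~ w`, and then `hadj`
would make `p ~ x`. -/
theorem apply_one_eq_zero_of_adj (hu : IsWave G B μ g q W u) (hμ : ∀ v, μ v ≠ 0)
    (hg : ∀ a b, G.Adj a b → 0 < g a b)
    (hadj : ∀ z ∈ B, ∀ a b : V, a ∉ B → b ∉ B → G.Adj a z → G.Adj b z → a ≠ b → G.Adj a b)
    (hx : x ∉ B) (hW : ∀ p, p ∉ B → p ≠ x → W p = 0) {p w : V} (hp : p ∉ B) (hpx : p ≠ x)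
    (hnpx : ¬G.Adj p x) (hpw : G.Adj p w) : u w 1 = 0 := by
  by_cases hw : w ∈ B
  · have hxw : ¬G.Adj x w := fun hxw => hnpx (hadj w hw x p hx hp hxw hpw hpx.symm).symm
    have h := hu.mul_apply_one_of_mem hμ hx hW hw
    rw [if_neg hxw] at h
    exact (mul_eq_zero.1 h).resolve_left (sum_weight_pos hg hp hpw).ne'
  · rw [hu.apply_of_le_one hW hw le_rfl, if_neg]
    rintro rfl
    exact hnpx hpw

theorem apply_two_pos (hu : IsWave G B μ g q W u) (hμ : ∀ v, 0 < μ v)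
    (hg : ∀ a b, G.Adj a b → 0 < g a b) (hx : x ∉ B) (hW : ∀ p, p ∉ B → p ≠ x → W p = 0)
    (hWx : 0 < W x) {p : V} (hp : p ∉ B) (hpx : p ≠ x) (hadjpx : G.Adj p x) : 0 < u p 2 := by
  have hμ' : ∀ v, μ v ≠ 0 := fun v => (hμ v).ne'
  have hux : u x 1 = W x := by rw [hu.apply_of_le_one hW hx le_rfl, if_pos rfl]
  have hsum : 0 < ∑ w ∈ univ.filter (fun w => G.Adj p w), g p w * u w 1 :=
    Finset.sum_pos'
      (fun w hw => mul_nonneg (hg _ _ (mem_filter.1 hw).2).le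
        (hu.apply_one_nonneg_of_adj hμ' hg hx hW hWx.le hp (mem_filter.1 hw).2))
      ⟨x, by simp [hadjpx], hux ▸ mul_pos (hg _ _ hadjpx) hWx⟩
  rw [← hu.mul_apply_two hp (hμ' p) (hu.apply_of_le_one_of_ne hW hp hpx zero_le_one)
    (hu.apply_of_le_one_of_ne hW hp hpx le_rfl)] at hsum
  exact pos_of_mul_pos_right hsum (hμ p).le

theorem apply_two_eq_zero (hu : IsWave G B μ g q W u) (hμ : ∀ v, μ v ≠ 0)
    (hg : ∀ a b, G.Adj a b → 0 < g a b)
    (hadj : ∀ z ∈ B, ∀ a b : V, a ∉ B → b ∉ B → G.Adj a z → G.Adj b z → a ≠ b → G.Adj a b)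
    (hx : x ∉ B) (hW : ∀ p, p ∉ B → p ≠ x → W p = 0) {p : V} (hp : p ∉ B) (hpx : p ≠ x)
    (hnpx : ¬G.Adj p x) : u p 2 = 0 := by
  have h := hu.mul_apply_two hp (hμ p) (hu.apply_of_le_one_of_ne hW hp hpx zero_le_one)
    (hu.apply_of_le_one_of_ne hW hp hpx le_rfl)
  rw [Finset.sum_eq_zero fun w hw => by
    rw [hu.apply_one_eq_zero_of_adj hμ hg hadj hx hW hp hpx hnpx (mem_filter.1 hw).2,
      mul_zero]] at h
  exact (mul_eq_zero.1 h).resolve_left (hμ p)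

end IsWave

end Wave

theorem edge_detection_interior_general (G : SimpleGraph V) [DecidableRel G.Adj] (B : Finset V)
    (μ : V → ℝ) (g : V → V → ℝ) (q : V → ℝ)
    (hμ : ∀ v, 0 < μ v)
    (hgpos : ∀ a b, G.Adj a b → 0 < g a b)
    (hadj : ∀ z ∈ B, ∀ a b : V, a ∉ B → b ∉ B → G.Adj a z → G.Adj b z → a ≠ b → G.Adj a b)
    (x y : V) (hx : x ∉ B) (hy : y ∉ B)
    (Wx Wy : V → ℝ)
    (hWxpos : 0 < Wx x) (hWxsupp : ∀ p, p ∉ B → p ≠ x → Wx p = 0)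
    (hWypos : 0 < Wy y) (hWysupp : ∀ p, p ∉ B → p ≠ y → Wy p = 0)
    (ux : V → ℕ → ℝ) (hux : IsWave G B μ g q Wx ux) :
    G.Adj x y ↔
      sInf {t : ℕ | ∑ p ∈ Bᶜ, μ p * ux p t * Wy p ≠ 0} = 2 := by
  have hpair : ∀ t, ∑ p ∈ Bᶜ, μ p * ux p t * Wy p = μ y * ux y t * Wy y := fun t =>
    Finset.sum_eq_single_of_mem y (mem_compl.2 hy) fun p hp hpy => by
      rw [hWysupp p (mem_compl.1 hp) hpy, mul_zero]
  simp only [hpair, ne_eq, mul_eq_zero, (hμ y).ne', hWypos.ne', false_or, or_false]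
  rw [Nat.sInf_setOf_eq_iff two_ne_zero]
  by_cases hyx : y = x
  · subst hyx
    simp only [G.irrefl, false_iff, not_and, not_forall, not_not]
    exact fun _ => ⟨0, two_pos, by rw [hux.2.2.2]; exact hWxpos.ne'⟩
  · have h01 : ∀ n < 2, ux y n = 0 := fun n hn =>
      hux.apply_of_le_one_of_ne hWxsupp hy hyx (Nat.lt_succ_iff.1 hn)
    rw [G.adj_comm]
    refine ⟨fun h => ⟨(hux.apply_two_pos hμ hgpos hx hWxsupp hWxpos hy hyx h).ne',
      fun n hn => not_not.2 (h01 n hn)⟩, fun h => by_contra fun hn => h.1 ?_⟩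
    exact hux.apply_two_eq_zero (fun v => (hμ v).ne') hgpos hadj hx hWxsupp hy hyx hn

/-- Edge detection between interior vertices via waves: `x ~ y` if and only if the first
time the wave generated by the single-point initial value `W_x` has nonzero `L²(G)` inner
product with `W_y` is exactly `t = 2`. -/
theorem edge_detection_interior (G : SimpleGraph V) [DecidableRel G.Adj] (B : Finset V)
    (μ : V → ℝ) (g : V → V → ℝ) (q : V → ℝ)
    (hμ : ∀ v, 0 < μ v)
    (hgpos : ∀ a b, G.Adj a b → 0 < g a b)
    (hgsymm : ∀ a b, g a b = g b a)
    (hadj : ∀ z ∈ B, ∀ a b : V, a ∉ B → b ∉ B → G.Adj a z → G.Adj b z → a ≠ b → G.Adj a b)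
    (x y : V) (hx : x ∉ B) (hy : y ∉ B)
    (Wx Wy : V → ℝ)
    (hWxpos : 0 < Wx x) (hWxsupp : ∀ p, p ∉ B → p ≠ x → Wx p = 0)
    (hWxn : ∀ z ∈ B, nder G B μ g Wx z = 0)
    (hWypos : 0 < Wy y) (hWysupp : ∀ p, p ∉ B → p ≠ y → Wy p = 0)
    (hWyn : ∀ z ∈ B, nder G B μ g Wy z = 0)
    (ux : V → ℕ → ℝ) (hux : IsWave G B μ g q Wx ux) :
    G.Adj x y ↔
      sInf {t : ℕ | ∑ p ∈ Bᶜ, μ p * ux p t * Wy p ≠ 0} = 2 :=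
  edge_detection_interior_general G B μ g q hμ hgpos hadj x y hx hy Wx Wy hWxpos hWxsupp hWypos
    hWysupp ux hux
end
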